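/- arXiv:hep-th/9412231 — 10 statements merged into one kernel-verified Lean document; each statement's English description precedes it below -/
import Mathlib

section
/- For all x, y, z, w ∈ ℂ and all i, j ∈ ℕ, the series ∑_{k=0}^∞ (1/k!)·m_{i,k}(x,y)·m_{k,j}(z,w) converges absolutely and its sum equals m_{i,j}(x+z, y+w)·exp(z·y). -/
/-- The polynomial `m_{n,m}(x,y) = ∑_{j=0}^{min(n,m)} (n choose j)(m choose j) j! x^{n-j} y^{m-j}`. -/
def mPoly {R : Type*} [CommSemiring R] (n m : ℕ) (x y : R) : R :=
  ∑ j ∈ Finset.range (min n m + 1),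
    (n.choose j : R) * (m.choose j : R) * (Nat.factorial j : R) * x ^ (n - j) * y ^ (m - j)

/-! The polynomials `m_{n,m}` are Appell in each variable:
`m_{n,m}(x + x', y) = ∑_a C(n,a) x^{n-a} m_{a,m}(x', y)`, and likewise in `y`. Expanding
`m_{i,k}(x,y)` and `m_{k,j}(z,w)` in this way reduces both the series and its claimed sum to the
case `x = w = 0`, where `m_{a,k}(0,y) m_{k,b}(z,0) = a! b! C(k,a) C(k,b) y^{k-a} z^{k-b}`.
For `a ≤ b`, shifting `k = r + b` and splitting `C(r+b, a)` by Vandermonde leaves finitely many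
series `∑_r C(r,c) t^r / r! = t^c / c! · e^t` with `t = yz`. Absolute convergence comes for free,
since a summable series in `ℂ` is absolutely summable. -/

open Finset

section CommSemiring

variable {R : Type*} [CommSemiring R]

lemma mPoly_comm (n m : ℕ) (x y : R) : mPoly n m x y = mPoly m n y x := by
  rw [mPoly, mPoly, min_comm]
  exact sum_congr rfl fun k _ => by ring

lemma mPoly_eq_sum_range_of_le {n N : ℕ} (h : n ≤ N) (m : ℕ) (x y : R) :
    mPoly n m x y = ∑ d ∈ range (N + 1),
      (n.choose d : R) * (m.choose d : R) * (d.factorial : R) * x ^ (n - d) * y ^ (m - d) := by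
  refine sum_subset (fun d hd => ?_) fun d hd hd' => ?_
  · simp only [mem_range] at *; omega
  · simp only [mem_range] at hd hd'
    obtain hn | hm : n < d ∨ m < d := by omega
    · simp [Nat.choose_eq_zero_of_lt hn]
    · simp [Nat.choose_eq_zero_of_lt hm]

lemma mPoly_zero_left (n m : ℕ) (y : R) :
    mPoly n m 0 y = (m.choose n : R) * (n.factorial : R) * y ^ (m - n) := by
  rw [mPoly_eq_sum_range_of_le le_rfl, sum_eq_single n]
  · simp
  · intro d hd hdn
    have : d < n := by simp only [mem_range] at hd; omega
    simp [zero_pow (Nat.sub_ne_zero_of_lt this)]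
  · simp

lemma sum_choose_mul_choose_mul_pow_mul_pow (n d : ℕ) (x x' : R) :
    ∑ a ∈ range (n + 1), (n.choose a : R) * (a.choose d : R) * x ^ (n - a) * x' ^ (a - d)
      = (n.choose d : R) * (x + x') ^ (n - d) := by
  obtain hnd | hdn := lt_or_ge n d
  · rw [Nat.choose_eq_zero_of_lt hnd, Nat.cast_zero, zero_mul]
    refine sum_eq_zero fun a ha => ?_
    rw [Nat.choose_eq_zero_of_lt (by simp only [mem_range] at ha; omega : a < d)]
    simp
  obtain ⟨p, rfl⟩ := Nat.exists_eq_add_of_le hdn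
  rw [show d + p + 1 = d + (p + 1) by ring, sum_range_add, sum_eq_zero fun a ha => ?_, zero_add,
    Nat.add_sub_cancel_left, add_comm x x', add_pow, mul_sum]
  · refine sum_congr rfl fun q _ => ?_
    rw [← Nat.cast_mul, Nat.choose_mul (Nat.le_add_right d q), Nat.add_sub_add_left,
      Nat.add_sub_cancel_left, Nat.add_sub_cancel_left]
    push_cast
    ring
  · rw [Nat.choose_eq_zero_of_lt (mem_range.mp ha)]
    simp

lemma mPoly_add_left (n m : ℕ) (x x' y : R) :
    mPoly n m (x + x') y =
      ∑ a ∈ range (n + 1), (n.choose a : R) * x ^ (n - a) * mPoly a m x' y := by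
  calc mPoly n m (x + x') y
      = ∑ d ∈ range (n + 1), (m.choose d : R) * d.factorial * y ^ (m - d) *
          ∑ a ∈ range (n + 1),
            (n.choose a : R) * (a.choose d : R) * x ^ (n - a) * x' ^ (a - d) := by
        rw [mPoly_eq_sum_range_of_le le_rfl]
        refine sum_congr rfl fun d _ => ?_
        rw [sum_choose_mul_choose_mul_pow_mul_pow]
        ring
    _ = ∑ a ∈ range (n + 1), (n.choose a : R) * x ^ (n - a) * mPoly a m x' y := by
        simp_rw [mul_sum]
        rw [sum_comm]
        refine sum_congr rfl fun a ha => ?_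
        rw [mPoly_eq_sum_range_of_le (Nat.lt_succ_iff.mp (mem_range.mp ha)), mul_sum]
        exact sum_congr rfl fun d _ => by ring

lemma mPoly_add_right (n m : ℕ) (x y y' : R) :
    mPoly n m x (y + y') =
      ∑ b ∈ range (m + 1), (m.choose b : R) * y ^ (m - b) * mPoly n b x y' := by
  rw [mPoly_comm, mPoly_add_left]
  simp_rw [mPoly_comm _ n]

end CommSemiring

lemma HasSum.of_nat_add {M : Type*} [AddCommMonoid M] [TopologicalSpace M] {f : ℕ → M} {a : M}
    (k : ℕ) (hf : ∀ n < k, f n = 0) (h : HasSum (fun n => f (n + k)) a) : HasSum f a := by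
  refine ((add_left_injective k).hasSum_iff fun n hn => hf n ?_).mp h
  by_contra! hkn
  exact hn ⟨n - k, Nat.sub_add_cancel hkn⟩

lemma hasSum_choose_mul_pow_div_factorial (c : ℕ) (t : ℂ) :
    HasSum (fun r => (r.choose c : ℂ) * t ^ r / r.factorial)
      (t ^ c / c.factorial * Complex.exp t) := by
  refine HasSum.of_nat_add c (fun r hr => by simp [Nat.choose_eq_zero_of_lt hr]) ?_
  rw [Complex.exp_eq_exp_ℂ]
  refine ((NormedSpace.expSeries_div_hasSum_exp t).mul_left (t ^ c / c.factorial)).congr_fun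
    fun r => ?_
  have hchoose : ((r + c).choose c : ℂ) ≠ 0 := by
    exact_mod_cast (Nat.choose_pos (Nat.le_add_left c r)).ne'
  rw [← Nat.add_choose_mul_factorial_mul_factorial r c]
  push_cast
  field_simp
  ring

lemma mPoly_zero_mul_mPoly_zero_add_eq_sum {a b : ℕ} (hab : a ≤ b) (y z : ℂ) (r : ℕ) :
    1 / ((r + b).factorial : ℂ) * mPoly a (r + b) 0 y * mPoly (r + b) b z 0
      = a.factorial * y ^ (b - a) * ∑ c ∈ range (a + 1),
          (b.choose (a - c) : ℂ) * ((r.choose c : ℂ) * (y * z) ^ r / r.factorial) := by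
  rw [mPoly_zero_left, mPoly_comm, mPoly_zero_left, Nat.add_choose_eq r b a,
    Finset.Nat.sum_antidiagonal_eq_sum_range_succ_mk, Nat.add_sub_cancel,
    show r + b - a = (b - a) + r by omega, ← Nat.add_choose_mul_factorial_mul_factorial r b]
  have hchoose : ((r + b).choose b : ℂ) ≠ 0 := by
    exact_mod_cast (Nat.choose_pos (Nat.le_add_left b r)).ne'
  have hb : (b.factorial : ℂ) ≠ 0 := by exact_mod_cast b.factorial_ne_zero
  push_cast
  simp only [sum_mul, mul_sum]
  refine sum_congr rfl fun c _ => ?_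
  field_simp
  ring

lemma factorial_mul_pow_mul_sum_eq_mPoly {a b : ℕ} (hab : a ≤ b) (y z : ℂ) :
    (a.factorial : ℂ) * y ^ (b - a) * ∑ c ∈ range (a + 1),
      (b.choose (a - c) : ℂ) * ((y * z) ^ c / c.factorial) = mPoly a b z y := by
  rw [mPoly_eq_sum_range_of_le le_rfl, ← sum_range_reflect, mul_sum]
  refine sum_congr rfl fun c hc => ?_
  have hca : c ≤ a := Nat.lt_succ_iff.mp (mem_range.mp hc)
  rw [Nat.add_sub_cancel, Nat.sub_sub_self hca, show b - c = (b - a) + (a - c) by omega,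
    ← Nat.choose_mul_factorial_mul_factorial hca]
  have hac : ((a - c).factorial : ℂ) ≠ 0 := by exact_mod_cast (a - c).factorial_ne_zero
  push_cast
  field_simp
  ring

lemma hasSum_mPoly_zero_mul_mPoly_zero_of_le {a b : ℕ} (hab : a ≤ b) (y z : ℂ) :
    HasSum (fun k => 1 / (k.factorial : ℂ) * mPoly a k 0 y * mPoly k b z 0)
      (mPoly a b z y * Complex.exp (z * y)) := by
  refine HasSum.of_nat_add b (fun k hk => ?_) ?_
  · rw [mPoly_comm k b, mPoly_zero_left b, Nat.choose_eq_zero_of_lt hk]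
    simp
  · have hvalue : (a.factorial : ℂ) * y ^ (b - a) * ∑ c ∈ range (a + 1),
        (b.choose (a - c) : ℂ) * ((y * z) ^ c / c.factorial * Complex.exp (y * z))
          = mPoly a b z y * Complex.exp (z * y) := by
      rw [← factorial_mul_pow_mul_sum_eq_mPoly hab, mul_comm z y]
      simp only [← mul_assoc, ← sum_mul]
    rw [← hvalue]
    exact (hasSum_sum fun c _ => (hasSum_choose_mul_pow_div_factorial c (y * z)).mul_left
      _).mul_left _ |>.congr_fun (mPoly_zero_mul_mPoly_zero_add_eq_sum hab y z)

lemma hasSum_mPoly_zero_mul_mPoly_zero (a b : ℕ) (y z : ℂ) :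
    HasSum (fun k => 1 / (k.factorial : ℂ) * mPoly a k 0 y * mPoly k b z 0)
      (mPoly a b z y * Complex.exp (z * y)) := by
  obtain hab | hba := le_total a b
  · exact hasSum_mPoly_zero_mul_mPoly_zero_of_le hab y z
  · convert hasSum_mPoly_zero_mul_mPoly_zero_of_le hba z y using 1
    · funext k
      rw [mPoly_comm a k, mPoly_comm k b]
      ring
    · rw [mPoly_comm, mul_comm z y]

theorem hasSum_mPoly_mul_mPoly (i j : ℕ) (x y z w : ℂ) :
    HasSum (fun k => 1 / (k.factorial : ℂ) * mPoly i k x y * mPoly k j z w)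
      (mPoly i j (x + z) (y + w) * Complex.exp (z * y)) := by
  have hterm : ∀ k, 1 / (k.factorial : ℂ) * mPoly i k x y * mPoly k j z w
      = ∑ a ∈ range (i + 1), ∑ b ∈ range (j + 1), (i.choose a * x ^ (i - a) *
          (j.choose b * w ^ (j - b))) *
            (1 / (k.factorial : ℂ) * mPoly a k 0 y * mPoly k b z 0) := by
    intro k
    have hx : mPoly i k x y =
        ∑ a ∈ range (i + 1), (i.choose a : ℂ) * x ^ (i - a) * mPoly a k 0 y := by
      simpa only [add_zero] using mPoly_add_left i k x 0 y
    have hw : mPoly k j z w =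
        ∑ b ∈ range (j + 1), (j.choose b : ℂ) * w ^ (j - b) * mPoly k b z 0 := by
      simpa only [add_zero] using mPoly_add_right k j z w 0
    rw [hx, hw, mul_assoc, sum_mul_sum, mul_sum]
    refine sum_congr rfl fun a _ => ?_
    rw [mul_sum]
    refine sum_congr rfl fun b _ => ?_
    ring
  have hvalue : mPoly i j (x + z) (y + w) * Complex.exp (z * y)
      = ∑ a ∈ range (i + 1), ∑ b ∈ range (j + 1), (i.choose a * x ^ (i - a) *
          (j.choose b * w ^ (j - b))) * (mPoly a b z y * Complex.exp (z * y)) := by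
    rw [add_comm y w, mPoly_add_left, sum_mul]
    refine sum_congr rfl fun a _ => ?_
    rw [mPoly_add_right, mul_sum, sum_mul]
    refine sum_congr rfl fun b _ => ?_
    ring
  rw [hvalue]
  exact (hasSum_sum fun a _ => hasSum_sum fun b _ =>
    (hasSum_mPoly_zero_mul_mPoly_zero a b y z).mul_left _).congr_fun hterm

/-- For all `x, y, z, w ∈ ℂ` and `i, j ∈ ℕ`, the series
`∑_{k=0}^∞ (1/k!)·m_{i,k}(x,y)·m_{k,j}(z,w)` converges absolutely and its sum equals
`m_{i,j}(x+z, y+w)·exp(z·y)`. -/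
theorem stmt0 (x y z w : ℂ) (i j : ℕ) :
    Summable (fun k : ℕ => ‖(1 / (Nat.factorial k : ℂ)) * mPoly i k x y * mPoly k j z w‖) ∧
    ∑' k : ℕ, (1 / (Nat.factorial k : ℂ)) * mPoly i k x y * mPoly k j z w
      = mPoly i j (x + z) (y + w) * Complex.exp (z * y) := by
  have h := hasSum_mPoly_mul_mPoly i j x y z w
  exact ⟨summable_norm_iff.mpr h.summable, h.tsum_eq⟩
end

section
/- Assume ∑_{i≥1}|ω_i|² < ∞. Then for every multi-index ν the sum of |v_{η,ν}(ω)|² over all multi-indices η is finite; more precisely ∑_η |v_{η,ν}(ω)|² ≤ (1/ν!)·(∏_{i≥1} m_{ν_i,ν_i}(|ω_i|+|ω_{−i}|, |ω_i|+|ω_{−i}|))·exp(∑_{i≥1}|ω_i|²). Consequently V(ω)e_ν := ∑_η v_{η,ν}(ω)·e_η is a well-defined element of H for every ν, so the vertex operator V(ω) is defined on the dense linear span of the basis vectors. -/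
/-- A multi-index: a finitely supported function from the positive integers to `ℕ`. -/
abbrev MultiIndex := ℕ+ →₀ ℕ

/-- `η! = ∏_{i≥1} η_i!`. -/
def miFact (η : MultiIndex) : ℕ := ∏ i ∈ η.support, Nat.factorial (η i)

/-- The matrix element `v_{η,ν}(ω) = (η!·ν!)^{-1/2} ∏_{i≥1} m_{η_i,ν_i}(ω_i, -ω_{-i})`;
the product is finite since `m_{0,0} = 1`. -/
noncomputable def vElem (ωp ωm : ℕ+ → ℂ) (η ν : MultiIndex) : ℂ :=
  ((1 / Real.sqrt ((miFact η : ℝ) * (miFact ν : ℝ))) : ℝ) *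
    ∏ i ∈ η.support ∪ ν.support, mPoly (η i) (ν i) (ωp i) (-ωm i)

/-!
The squared matrix element factors over the coordinates:
`|v_{η,ν}|² ≤ (1/ν!) ∏_i m_{η_i,ν_i}(|ω_i|, |ω_{-i}|)² / η_i!`, and a sum over all multi-indices
of such a product of one-variable weights (equal to `1` at `η_i = 0` off `supp ν`) is at most the
product of the one-variable sums. Each of these is computed exactly:
`∑_n m_{n,m}(x,y)²/n! = e^{x²} m_{m,m}(x+y, x+y)`. Expanding the square, the sum over `n` is done
with `C(n,j)/n! = 1/(j!(n-j)!)` and Vandermonde's identity, and the remaining finite double sum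
collapses by the binomial theorem for `(x+y)^{m-r}`. Off `supp ν` the factor is `e^{|ω_i|²}`,
and these multiply to at most `exp(∑|ω_i|²)`. All series are taken in `ℝ≥0∞`, where
rearrangements need no summability side conditions.
-/

open scoped ENNReal NNReal Nat
open Finset

section mPoly

variable {R : Type*} [CommSemiring R]

lemma map_mPoly {S : Type*} [CommSemiring S] (f : R →+* S) (n m : ℕ) (x y : R) :
    f (mPoly n m x y) = mPoly n m (f x) (f y) := by
  simp [mPoly]

@[simp]
lemma mPoly_zero_zero (x y : R) : mPoly 0 0 x y = 1 := by
  simp [mPoly]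

lemma mPoly_eq_sum_range {n m N : ℕ} (h : min n m ≤ N) (x y : R) :
    mPoly n m x y = ∑ j ∈ range (N + 1),
      (n.choose j : R) * m.choose j * j ! * x ^ (n - j) * y ^ (m - j) := by
  refine sum_subset (range_subset_range.mpr (by omega)) fun j hjN hj => ?_
  have : n < j ∨ m < j := by simp only [mem_range] at hj hjN; omega
  rcases this with h | h <;> simp [Nat.choose_eq_zero_of_lt h]

lemma sum_choose_mul_choose_mul_pow {m r : ℕ} (hr : r ≤ m) (x y : R) :
    ∑ j ∈ range (m + 1), (m.choose j : R) * j.choose r * x ^ (j - r) * y ^ (m - j)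
      = m.choose r * (x + y) ^ (m - r) := by
  have hvanish : ∀ j ∈ range (m + 1), j ∉ Ico r (m + 1) →
      (m.choose j : R) * j.choose r * x ^ (j - r) * y ^ (m - j) = 0 := fun j hj hjr => by
    simp only [mem_range, mem_Ico] at hj hjr
    simp [Nat.choose_eq_zero_of_lt (show j < r by omega)]
  have hsub : Ico r (m + 1) ⊆ range (m + 1) := fun j hj => by
    simp only [mem_Ico, mem_range] at hj ⊢; omega
  rw [← sum_subset hsub hvanish, sum_Ico_eq_sum_range,
    show m + 1 - r = m - r + 1 by omega, add_pow, mul_sum]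
  refine sum_congr rfl fun a ha => ?_
  have hchoose : (m.choose (r + a) : R) * (r + a).choose r = m.choose r * (m - r).choose a := by
    have := Nat.choose_mul (n := m) (k := r + a) (s := r) (Nat.le_add_right r a)
    rw [Nat.add_sub_cancel_left] at this
    rw [← Nat.cast_mul, ← Nat.cast_mul, this]
  rw [Nat.add_sub_cancel_left, show m - (r + a) = m - r - a by omega, hchoose]
  ring

lemma mPoly_add_add (m : ℕ) (x y : R) :
    mPoly m m (x + y) (x + y) = ∑ j ∈ range (m + 1), ∑ k ∈ range (m + 1),
      (m.choose j : R) * m.choose k * y ^ (m - j) * y ^ (m - k) * mPoly j k x x := by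
  set F : ℕ → ℕ → R := fun r j => m.choose j * j.choose r * x ^ (j - r) * y ^ (m - j)
  have hexpand : ∀ j ∈ range (m + 1), ∀ k ∈ range (m + 1),
      (m.choose j : R) * m.choose k * y ^ (m - j) * y ^ (m - k) * mPoly j k x x
        = ∑ r ∈ range (m + 1), (r ! : R) * (F r j * F r k) := by
    intro j hj k _
    rw [mPoly_eq_sum_range (N := m) (by simp only [mem_range] at hj; omega), mul_sum]
    exact sum_congr rfl fun r _ => by ring
  calc mPoly m m (x + y) (x + y)
      = ∑ r ∈ range (m + 1), (r ! : R) * ((∑ j ∈ range (m + 1), F r j)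
          * ∑ k ∈ range (m + 1), F r k) := by
        rw [mPoly, min_self]
        refine sum_congr rfl fun r hr => ?_
        rw [sum_choose_mul_choose_mul_pow (Nat.lt_succ_iff.mp (mem_range.mp hr))]
        ring
    _ = ∑ j ∈ range (m + 1), ∑ k ∈ range (m + 1), ∑ r ∈ range (m + 1),
          (r ! : R) * (F r j * F r k) := by
        simp_rw [sum_mul_sum, mul_sum]
        rw [sum_comm]
        exact sum_congr rfl fun _ _ => sum_comm
    _ = _ := (sum_congr rfl fun j hj => sum_congr rfl fun k hk => hexpand j hj k hk).symm

end mPoly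

noncomputable def ennrealExp (z : ℝ≥0∞) : ℝ≥0∞ := ∑' n : ℕ, z ^ n * (n ! : ℝ≥0∞)⁻¹

lemma ennrealExp_ofReal {t : ℝ} (ht : 0 ≤ t) :
    ennrealExp (ENNReal.ofReal t) = ENNReal.ofReal (Real.exp t) := by
  rw [Real.exp_eq_exp_ℝ, NormedSpace.exp_eq_tsum_div,
    ENNReal.ofReal_tsum_of_nonneg (fun n => by positivity) (Real.summable_pow_div_factorial t)]
  refine tsum_congr fun n => ?_
  rw [div_eq_mul_inv, ENNReal.ofReal_mul (by positivity), ENNReal.ofReal_pow ht,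
    ENNReal.ofReal_inv_of_pos (by positivity), ENNReal.ofReal_natCast]

lemma choose_add_mul_inv_factorial (t u : ℕ) :
    ((t + u).choose t : ℝ≥0∞) * ((t + u)! : ℝ≥0∞)⁻¹ = (t ! : ℝ≥0∞)⁻¹ * (u ! : ℝ≥0∞)⁻¹ := by
  have h : ((t + u).choose t : ℝ≥0) * ((t + u)! : ℝ≥0)⁻¹ = (t ! : ℝ≥0)⁻¹ * (u ! : ℝ≥0)⁻¹ := by
    rw [Nat.cast_choose ℝ≥0 (Nat.le_add_right t u), Nat.add_sub_cancel_left]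
    field_simp
  simpa [ENNReal.coe_inv, Nat.factorial_ne_zero] using congrArg ((↑) : ℝ≥0 → ℝ≥0∞) h

lemma inv_factorial_mul_choose_mul_factorial {r j : ℕ} (h : r ≤ j) :
    (j ! : ℝ≥0∞)⁻¹ * (j.choose r * r !) = ((j - r)! : ℝ≥0∞)⁻¹ := by
  have hnn : (j ! : ℝ≥0)⁻¹ * (j.choose r * r !) = ((j - r)! : ℝ≥0)⁻¹ := by
    rw [Nat.cast_choose ℝ≥0 h]
    field_simp
  simpa [ENNReal.coe_inv, Nat.factorial_ne_zero] using congrArg ((↑) : ℝ≥0 → ℝ≥0∞) hnn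

lemma tsum_choose_mul_inv_factorial_mul (t : ℕ) (h : ℕ → ℝ≥0∞) :
    ∑' s, (s.choose t : ℝ≥0∞) * (s ! : ℝ≥0∞)⁻¹ * h s
      = (t ! : ℝ≥0∞)⁻¹ * ∑' u, (u ! : ℝ≥0∞)⁻¹ * h (t + u) := by
  rw [← ENNReal.summable.sum_add_tsum_nat_add' (k := t),
    sum_eq_zero fun s hs => by simp [Nat.choose_eq_zero_of_lt (mem_range.mp hs)],
    zero_add, ← ENNReal.tsum_mul_left]
  refine tsum_congr fun u => ?_
  rw [add_comm u t, choose_add_mul_inv_factorial]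
  ring

lemma tsum_choose_mul_choose_mul_pow (j k : ℕ) (x : ℝ≥0∞) :
    ∑' n, (n.choose j : ℝ≥0∞) * n.choose k * x ^ (n - j) * x ^ (n - k) * (n ! : ℝ≥0∞)⁻¹
      = ennrealExp (x ^ 2) * (j ! : ℝ≥0∞)⁻¹ * (k ! : ℝ≥0∞)⁻¹ * mPoly j k x x := by
  have hinner : ∀ r ∈ range (j + 1),
      ∑' u, (u ! : ℝ≥0∞)⁻¹ * ((k.choose r : ℝ≥0∞) * u.choose (j - r) * x ^ (k + u - j) * x ^ u)
        = ennrealExp (x ^ 2) * ((j - r)! : ℝ≥0∞)⁻¹ * (k.choose r * x ^ (j - r) * x ^ (k - r)) := by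
    intro r hr
    have hrj : r ≤ j := Nat.lt_succ_iff.mp (mem_range.mp hr)
    rcases le_or_gt r k with hrk | hrk
    · calc _ = ∑' u, (u.choose (j - r) : ℝ≥0∞) * (u ! : ℝ≥0∞)⁻¹
              * (k.choose r * x ^ (k + u - j) * x ^ u) := tsum_congr fun u => by ring
        _ = _ := by
          rw [tsum_choose_mul_inv_factorial_mul, ennrealExp, ← ENNReal.tsum_mul_left,
            ← ENNReal.tsum_mul_right, ← ENNReal.tsum_mul_right]
          refine tsum_congr fun w => ?_
          rw [show k + (j - r + w) - j = k - r + w by omega]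
          ring
    · simp [Nat.choose_eq_zero_of_lt hrk]
  calc _ = ∑' n, (n.choose k : ℝ≥0∞) * (n ! : ℝ≥0∞)⁻¹ * (n.choose j * x ^ (n - j) * x ^ (n - k)) :=
        tsum_congr fun n => by ring
    _ = (k ! : ℝ≥0∞)⁻¹ * ∑ r ∈ range (j + 1), ∑' u, (u ! : ℝ≥0∞)⁻¹
          * ((k.choose r : ℝ≥0∞) * u.choose (j - r) * x ^ (k + u - j) * x ^ u) := by
        rw [tsum_choose_mul_inv_factorial_mul,
          ← Summable.tsum_finsetSum fun _ _ => ENNReal.summable]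
        congr 1
        refine tsum_congr fun u => ?_
        rw [Nat.add_choose_eq, Nat.sum_antidiagonal_eq_sum_range_succ_mk, Nat.add_sub_cancel_left]
        push_cast
        rw [sum_mul, sum_mul, mul_sum]
    _ = ennrealExp (x ^ 2) * (k ! : ℝ≥0∞)⁻¹ * ∑ r ∈ range (j + 1),
          (j ! : ℝ≥0∞)⁻¹ * (j.choose r * r !) * (k.choose r * x ^ (j - r) * x ^ (k - r)) := by
        rw [sum_congr rfl hinner, mul_sum, mul_sum]
        refine sum_congr rfl fun r hr => ?_
        rw [inv_factorial_mul_choose_mul_factorial (Nat.lt_succ_iff.mp (mem_range.mp hr))]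
        ring
    _ = _ := by
        rw [mPoly_eq_sum_range (N := j) (min_le_left j k), mul_sum, mul_sum]
        exact sum_congr rfl fun r _ => by ring

lemma tsum_mPoly_sq_mul_inv_factorial (m : ℕ) (x y : ℝ≥0∞) :
    ∑' n, mPoly n m x y ^ 2 * (n ! : ℝ≥0∞)⁻¹ = ennrealExp (x ^ 2) * mPoly m m (x + y) (x + y) := by
  set a : ℕ → ℕ → ℝ≥0∞ := fun j n => m.choose j * j ! * y ^ (m - j) * (n.choose j * x ^ (n - j))
  have hfact : ∀ j : ℕ, (j ! : ℝ≥0∞) * (j ! : ℝ≥0∞)⁻¹ = 1 := fun j =>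
    ENNReal.mul_inv_cancel (by positivity) (ENNReal.natCast_ne_top _)
  have hterm : ∀ j k, ∑' n, a j n * a k n * (n ! : ℝ≥0∞)⁻¹ = ennrealExp (x ^ 2)
      * ((m.choose j : ℝ≥0∞) * m.choose k * y ^ (m - j) * y ^ (m - k) * mPoly j k x x) := by
    intro j k
    calc _ = ((m.choose j : ℝ≥0∞) * m.choose k * y ^ (m - j) * y ^ (m - k)) * (j ! * k !)
          * ∑' n, (n.choose j : ℝ≥0∞) * n.choose k * x ^ (n - j) * x ^ (n - k)
            * (n ! : ℝ≥0∞)⁻¹ := by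
          rw [← ENNReal.tsum_mul_left]
          exact tsum_congr fun n => by ring
      _ = ennrealExp (x ^ 2) * ((j ! : ℝ≥0∞) * (j ! : ℝ≥0∞)⁻¹) * ((k ! : ℝ≥0∞) * (k ! : ℝ≥0∞)⁻¹)
          * ((m.choose j : ℝ≥0∞) * m.choose k * y ^ (m - j) * y ^ (m - k) * mPoly j k x x) := by
          rw [tsum_choose_mul_choose_mul_pow]
          ring
      _ = _ := by rw [hfact, hfact, mul_one, mul_one]
  calc _ = ∑' n, ∑ j ∈ range (m + 1), ∑ k ∈ range (m + 1), a j n * a k n * (n ! : ℝ≥0∞)⁻¹ := by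
        refine tsum_congr fun n => ?_
        rw [mPoly_eq_sum_range (N := m) (min_le_right n m), sq, sum_mul_sum, sum_mul]
        refine sum_congr rfl fun j _ => ?_
        rw [sum_mul]
        exact sum_congr rfl fun k _ => by ring
    _ = ∑ j ∈ range (m + 1), ∑ k ∈ range (m + 1), ∑' n, a j n * a k n * (n ! : ℝ≥0∞)⁻¹ := by
        rw [Summable.tsum_finsetSum fun _ _ => ENNReal.summable]
        exact sum_congr rfl fun _ _ => Summable.tsum_finsetSum fun _ _ => ENNReal.summable
    _ = _ := by simp_rw [hterm, ← mul_sum, mPoly_add_add]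

section ProductBound

variable {ι : Type*} [DecidableEq ι]

lemma sum_prod_le_prod_tsum (g : ι → ℕ → ℝ≥0∞) {A : Finset (ι →₀ ℕ)} {T : Finset ι}
    (hA : ∀ η ∈ A, η.support ⊆ T) :
    ∑ η ∈ A, ∏ i ∈ T, g i (η i) ≤ ∏ i ∈ T, ∑' n, g i n := by
  set box : ι → Finset ℕ := fun i => A.image (· i)
  set restrict : (ι →₀ ℕ) → ((i : ι) → i ∈ T → ℕ) := fun η i _ => η i
  have hinj : Set.InjOn restrict A := fun η₁ h₁ η₂ h₂ heq => by
    ext i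
    by_cases hi : i ∈ T
    · exact congrFun (congrFun heq i) hi
    · rw [Finsupp.notMem_support_iff.mp fun hs => hi (hA η₁ h₁ hs),
        Finsupp.notMem_support_iff.mp fun hs => hi (hA η₂ h₂ hs)]
  have hsub : A.image restrict ⊆ T.pi box := by
    simp only [subset_iff, mem_image, mem_pi]
    rintro _ ⟨η, hη, rfl⟩ i _
    exact mem_image_of_mem _ hη
  calc ∑ η ∈ A, ∏ i ∈ T, g i (η i)
      = ∑ p ∈ A.image restrict, ∏ i ∈ T.attach, g i (p i.1 i.2) := by
        rw [sum_image hinj]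
        exact sum_congr rfl fun η _ => (prod_attach T fun i => g i (η i)).symm
    _ ≤ ∑ p ∈ T.pi box, ∏ i ∈ T.attach, g i (p i.1 i.2) := sum_le_sum_of_subset hsub
    _ = ∏ i ∈ T, ∑ n ∈ box i, g i n := (prod_sum T box g).symm
    _ ≤ ∏ i ∈ T, ∑' n, g i n := prod_le_prod' fun i _ => ENNReal.sum_le_tsum (box i)

lemma tsum_prod_support_union_le (S : Finset ι) (g : ι → ℕ → ℝ≥0∞)
    (hg : ∀ i ∉ S, g i 0 = 1) {C : ℝ≥0∞}
    (hC : ∀ T : Finset ι, S ⊆ T → ∏ i ∈ T, ∑' n, g i n ≤ C) :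
    ∑' η : ι →₀ ℕ, ∏ i ∈ η.support ∪ S, g i (η i) ≤ C := by
  rw [ENNReal.tsum_eq_iSup_sum]
  refine iSup_le fun A => ?_
  set T := S ∪ A.sup Finsupp.support
  have hA : ∀ η ∈ A, η.support ⊆ T := fun η hη => (le_sup hη).trans subset_union_right
  calc ∑ η ∈ A, ∏ i ∈ η.support ∪ S, g i (η i)
      = ∑ η ∈ A, ∏ i ∈ T, g i (η i) := by
        refine sum_congr rfl fun η hη => prod_subset (union_subset (hA η hη) subset_union_left) ?_
        intro i _ hi
        rw [Finsupp.notMem_support_iff.mp fun h => hi (mem_union_left _ h),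
          hg i fun h => hi (mem_union_right _ h)]
    _ ≤ ∏ i ∈ T, ∑' n, g i n := sum_prod_le_prod_tsum g hA
    _ ≤ C := hC T subset_union_left

end ProductBound

@[norm_cast]
lemma ENNReal.coe_mPoly (n m : ℕ) (x y : ℝ≥0) :
    ((mPoly n m x y : ℝ≥0) : ℝ≥0∞) = mPoly n m (x : ℝ≥0∞) y :=
  map_mPoly ENNReal.ofNNRealHom n m x y

@[norm_cast]
lemma NNReal.coe_mPoly (n m : ℕ) (x y : ℝ≥0) :
    ((mPoly n m x y : ℝ≥0) : ℝ) = mPoly n m (x : ℝ) y :=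
  map_mPoly NNReal.toRealHom n m x y

lemma nnnorm_mPoly_le (n m : ℕ) (z w : ℂ) : ‖mPoly n m z w‖₊ ≤ mPoly n m ‖z‖₊ ‖w‖₊ :=
  (nnnorm_sum_le _ _).trans (le_of_eq (sum_congr rfl fun j _ => by simp))

lemma miFact_pos (η : MultiIndex) : 0 < miFact η :=
  prod_pos fun i _ => (η i).factorial_pos

lemma miFact_eq_prod_union (η ν : MultiIndex) :
    (miFact η : ℝ≥0) = ∏ i ∈ η.support ∪ ν.support, ((η i)! : ℝ≥0) := by
  rw [miFact, Nat.cast_prod]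
  exact prod_subset subset_union_left fun i _ hi => by simp [Finsupp.notMem_support_iff.mp hi]

lemma nnnorm_vElem_sq_le (ωp ωm : ℕ+ → ℂ) (η ν : MultiIndex) :
    ‖vElem ωp ωm η ν‖₊ ^ 2 ≤ (miFact ν : ℝ≥0)⁻¹ * ∏ i ∈ η.support ∪ ν.support,
      mPoly (η i) (ν i) ‖ωp i‖₊ ‖ωm i‖₊ ^ 2 * ((η i)! : ℝ≥0)⁻¹ := by
  have hscale : ‖((1 / √((miFact η : ℝ) * miFact ν) : ℝ) : ℂ)‖₊ ^ 2
      = (miFact η : ℝ≥0)⁻¹ * (miFact ν : ℝ≥0)⁻¹ := by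
    have := miFact_pos η
    have := miFact_pos ν
    rw [Complex.nnnorm_real]
    apply NNReal.eq
    push_cast [coe_nnnorm]
    rw [Real.norm_eq_abs, sq_abs, div_pow, Real.sq_sqrt (by positivity)]
    field_simp
  have hprod : ‖∏ i ∈ η.support ∪ ν.support, mPoly (η i) (ν i) (ωp i) (-ωm i)‖₊
      ≤ ∏ i ∈ η.support ∪ ν.support, mPoly (η i) (ν i) ‖ωp i‖₊ ‖ωm i‖₊ := by
    rw [nnnorm_prod]
    exact prod_le_prod' fun i _ => by simpa using nnnorm_mPoly_le (η i) (ν i) (ωp i) (-ωm i)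
  calc ‖vElem ωp ωm η ν‖₊ ^ 2
      ≤ (miFact η : ℝ≥0)⁻¹ * (miFact ν : ℝ≥0)⁻¹
          * (∏ i ∈ η.support ∪ ν.support, mPoly (η i) (ν i) ‖ωp i‖₊ ‖ωm i‖₊) ^ 2 := by
        rw [vElem, nnnorm_mul, mul_pow, hscale]
        gcongr
    _ = _ := by
        rw [miFact_eq_prod_union η ν, ← prod_inv_distrib, ← prod_pow, prod_mul_distrib]
        ring

lemma tsum_nnnorm_vElem_sq_le (ωp ωm : ℕ+ → ℂ) (hω : Summable fun i : ℕ+ => ‖ωp i‖ ^ 2)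
    (ν : MultiIndex) :
    ∑' η : MultiIndex, ((‖vElem ωp ωm η ν‖₊ ^ 2 : ℝ≥0) : ℝ≥0∞)
      ≤ (((miFact ν : ℝ≥0)⁻¹ * ∏ i ∈ ν.support,
          mPoly (ν i) (ν i) (‖ωp i‖₊ + ‖ωm i‖₊) (‖ωp i‖₊ + ‖ωm i‖₊) : ℝ≥0) : ℝ≥0∞)
        * ENNReal.ofReal (Real.exp (∑' i, ‖ωp i‖ ^ 2)) := by
  set g : ℕ+ → ℕ → ℝ≥0∞ := fun i n =>
    ((mPoly n (ν i) ‖ωp i‖₊ ‖ωm i‖₊ ^ 2 * (n ! : ℝ≥0)⁻¹ : ℝ≥0) : ℝ≥0∞)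
  have hg : ∀ i ∉ ν.support, g i 0 = 1 := fun i hi => by
    simp [g, Finsupp.notMem_support_iff.mp hi]
  have htsum : ∀ i, ∑' n, g i n = ENNReal.ofReal (Real.exp (‖ωp i‖ ^ 2))
      * ((mPoly (ν i) (ν i) (‖ωp i‖₊ + ‖ωm i‖₊) (‖ωp i‖₊ + ‖ωm i‖₊) : ℝ≥0) : ℝ≥0∞) := fun i => by
    have hsq : ((‖ωp i‖₊ : ℝ≥0∞)) ^ 2 = ENNReal.ofReal (‖ωp i‖ ^ 2) := by
      rw [ENNReal.ofReal_pow (norm_nonneg _), ofReal_norm, enorm_eq_nnnorm]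
    simp only [g]
    push_cast [ENNReal.coe_inv (Nat.cast_ne_zero.mpr (Nat.factorial_ne_zero _))]
    rw [tsum_mPoly_sq_mul_inv_factorial, hsq, ennrealExp_ofReal (by positivity)]
  have hprod : ∀ T, ν.support ⊆ T → ∏ i ∈ T, ∑' n, g i n
      ≤ ENNReal.ofReal (Real.exp (∑' i, ‖ωp i‖ ^ 2)) * ∏ i ∈ ν.support,
        ((mPoly (ν i) (ν i) (‖ωp i‖₊ + ‖ωm i‖₊) (‖ωp i‖₊ + ‖ωm i‖₊) : ℝ≥0) : ℝ≥0∞) := by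
    intro T hT
    rw [prod_congr rfl fun i _ => htsum i, prod_mul_distrib,
      ← ENNReal.ofReal_prod_of_nonneg fun _ _ => (Real.exp_pos _).le, ← Real.exp_sum,
      prod_subset hT fun i _ hi => by simp [Finsupp.notMem_support_iff.mp hi]]
    gcongr
    exact hω.sum_le_tsum T fun _ _ => by positivity
  have hpoint : ∀ η : MultiIndex, ((‖vElem ωp ωm η ν‖₊ ^ 2 : ℝ≥0) : ℝ≥0∞)
      ≤ ((miFact ν : ℝ≥0)⁻¹ : ℝ≥0) * ∏ i ∈ η.support ∪ ν.support, g i (η i) := fun η => by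
    simpa [g] using ENNReal.coe_le_coe.mpr (nnnorm_vElem_sq_le ωp ωm η ν)
  calc _ ≤ ∑' η : MultiIndex, ((miFact ν : ℝ≥0)⁻¹ : ℝ≥0) * ∏ i ∈ η.support ∪ ν.support, g i (η i) :=
        ENNReal.tsum_le_tsum hpoint
    _ ≤ _ := by
        rw [ENNReal.tsum_mul_left, ENNReal.coe_mul, ENNReal.ofNNReal_finsetProd, mul_assoc,
          mul_comm (∏ i ∈ _, _)]
        gcongr
        exact tsum_prod_support_union_le ν.support g hg hprod

lemma NNReal.summable_and_tsum_le_toReal_of_tsum_coe_le {α : Type*} {f : α → ℝ≥0} {c : ℝ≥0∞}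
    (hc : c ≠ ⊤) (h : ∑' a, (f a : ℝ≥0∞) ≤ c) :
    Summable (fun a => (f a : ℝ)) ∧ ∑' a, (f a : ℝ) ≤ c.toReal := by
  have hf : Summable f := ENNReal.tsum_coe_ne_top_iff_summable.mp (ne_top_of_le_ne_top hc h)
  refine ⟨NNReal.summable_coe.mpr hf, ?_⟩
  rw [← NNReal.coe_tsum, ← ENNReal.coe_toReal, ENNReal.coe_tsum hf]
  exact ENNReal.toReal_mono hc h

/-- If `∑_{i≥1} |ω_i|² < ∞`, then for every multi-index `ν` the column
`(v_{η,ν}(ω))_η` is square-summable, with the explicit bound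
`∑_η |v_{η,ν}(ω)|² ≤ (1/ν!)·(∏_{i≥1} m_{ν_i,ν_i}(|ω_i|+|ω_{−i}|,|ω_i|+|ω_{−i}|))·exp(∑_{i≥1}|ω_i|²)`;
consequently `V(ω)e_ν` is a well-defined element of `H = ℓ²` (i.e. the column is `Memℓp _ 2`),
so the vertex operator is defined on the dense span of the basis vectors. -/
theorem stmt1 (ωp ωm : ℕ+ → ℂ) (hω : Summable fun i : ℕ+ => ‖ωp i‖ ^ 2) (ν : MultiIndex) :
    Summable (fun η : MultiIndex => ‖vElem ωp ωm η ν‖ ^ 2) ∧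
    (∑' η : MultiIndex, ‖vElem ωp ωm η ν‖ ^ 2 ≤
      (1 / (miFact ν : ℝ)) *
        (∏ i ∈ ν.support, mPoly (ν i) (ν i) (‖ωp i‖ + ‖ωm i‖) (‖ωp i‖ + ‖ωm i‖)) *
        Real.exp (∑' i : ℕ+, ‖ωp i‖ ^ 2)) ∧
    Memℓp (fun η : MultiIndex => vElem ωp ωm η ν) 2 := by
  obtain ⟨hsum, hle⟩ := NNReal.summable_and_tsum_le_toReal_of_tsum_coe_le
    (by finiteness) (tsum_nnnorm_vElem_sq_le ωp ωm hω ν)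
  rw [ENNReal.toReal_mul, ENNReal.coe_toReal, ENNReal.toReal_ofReal (Real.exp_pos _).le] at hle
  push_cast [coe_nnnorm] at hsum hle
  exact ⟨hsum, by simpa only [one_div] using hle, memℓp_gen (by simpa using hsum)⟩
end

section
/- Let n ≥ 1 and let S be a function from ℂ to the n×n complex matrices that is analytic on a neighborhood of 0 and such that S(z) is invertible for all z with 0 < |z| < ε, for some ε > 0. Then there exist matrix-valued functions L and R, analytic on a neighborhood of 0, whose determinants det L(z) and det R(z) are constant and nonzero, such that L(z)·S(z)·R(z) is the diagonal matrix diag(s₁(z), …, s_n(z)) where each s_i is analytic near 0 and not identically zero, and the orders of vanishing at 0 satisfy ord₀ s₁ ≤ ord₀ s₂ ≤ … ≤ ord₀ s_n. -/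
/-!
The ring of germs of analytic functions at `z₀` is a discrete valuation ring, with valuation the
order of vanishing, so the usual Smith reduction works. An entry of minimal finite order divides
every other entry; after swapping it into the corner, row and column operations with analytic
multipliers clear its row and column. The complementary block still has entries of at least
that order and a determinant that is not identically zero, so by induction it is equivalent to a
diagonal matrix, whose entries have orders no smaller than the pivot's.
-/

open Filter Topology Matrix

lemma Fin.monotone_cons {α : Type*} [Preorder α] {n : ℕ} {f : Fin n → α} {a : α}
    (hf : Monotone f) (ha : ∀ i, a ≤ f i) : Monotone (Fin.cons a f : Fin (n + 1) → α) := by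
  rw [monotone_iff_forall_lt]
  exact (Fin.liftFun_cons (· ≤ ·)).2 ⟨ha, fun _ _ hij => hf hij.le⟩

section AnalyticOrder

variable {𝕜 E : Type*} [NontriviallyNormedField 𝕜] [NormedAddCommGroup E] [NormedSpace 𝕜 E]
  {z₀ : 𝕜}

theorem le_analyticOrderAt_sum {ι : Type*} (s : Finset ι) {f : ι → 𝕜 → E} {k : ℕ∞}
    (h : ∀ i ∈ s, k ≤ analyticOrderAt (f i) z₀) :
    k ≤ analyticOrderAt (fun z => ∑ i ∈ s, f i z) z₀ := by
  classical
  induction s using Finset.induction_on with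
  | empty => simp [analyticOrderAt_eq_top.2 (Eventually.of_forall fun _ => rfl)]
  | insert a s ha ih =>
    simp only [Finset.sum_insert ha]
    exact (le_min (h a (s.mem_insert_self a))
      (ih fun i hi => h i (Finset.mem_insert_of_mem hi))).trans le_analyticOrderAt_add

theorem le_analyticOrderAt_mul_of_le_right {f g : 𝕜 → 𝕜} {k : ℕ∞} (hf : AnalyticAt 𝕜 f z₀)
    (hg : AnalyticAt 𝕜 g z₀) (hk : k ≤ analyticOrderAt g z₀) :
    k ≤ analyticOrderAt (fun z => f z * g z) z₀ :=
  hk.trans <| (analyticOrderAt_mul hf hg).symm ▸ le_add_self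

theorem le_analyticOrderAt_mul_of_le_left {f g : 𝕜 → 𝕜} {k : ℕ∞} (hf : AnalyticAt 𝕜 f z₀)
    (hg : AnalyticAt 𝕜 g z₀) (hk : k ≤ analyticOrderAt f z₀) :
    k ≤ analyticOrderAt (fun z => f z * g z) z₀ :=
  hk.trans <| (analyticOrderAt_mul hf hg).symm ▸ le_self_add

theorem AnalyticAt.exists_eventuallyEq_mul_of_analyticOrderAt_le {f p : 𝕜 → 𝕜}
    (hf : AnalyticAt 𝕜 f z₀) (hp : AnalyticAt 𝕜 p z₀) (hp_top : analyticOrderAt p z₀ ≠ ⊤)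
    (h : analyticOrderAt p z₀ ≤ analyticOrderAt f z₀) :
    ∃ q, AnalyticAt 𝕜 q z₀ ∧ ∀ᶠ z in 𝓝 z₀, f z = q z * p z := by
  obtain ⟨u, hu, hu0, hpu⟩ := hp.analyticOrderAt_ne_top.1 hp_top
  rw [← Nat.cast_analyticOrderNatAt hp_top] at h
  obtain ⟨g, hg, hfg⟩ := (natCast_le_analyticOrderAt hf).1 h
  refine ⟨fun z => g z / u z, hg.div hu hu0, ?_⟩
  filter_upwards [hfg, hpu, hu.continuousAt.eventually_ne hu0] with z hfz hpz huz
  rw [hfz, hpz, smul_eq_mul, smul_eq_mul]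
  field_simp

end AnalyticOrder

namespace Matrix

section AnalyticEntries

variable {𝕜 : Type*} [NontriviallyNormedField 𝕜] {z₀ : 𝕜} {l m n : Type*} [Fintype m]
  {A : 𝕜 → Matrix l m 𝕜} {M : 𝕜 → Matrix m n 𝕜}

theorem analyticAt_mul_apply (hA : ∀ i j, AnalyticAt 𝕜 (A · i j) z₀)
    (hM : ∀ i j, AnalyticAt 𝕜 (M · i j) z₀) (i : l) (j : n) :
    AnalyticAt 𝕜 (fun z => (A z * M z) i j) z₀ := by
  simp only [mul_apply]
  exact Finset.analyticAt_fun_sum _ fun k _ => (hA i k).mul (hM k j)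

theorem le_analyticOrderAt_mul_apply_of_right {k : ℕ∞}
    (hA : ∀ i j, AnalyticAt 𝕜 (A · i j) z₀) (hM : ∀ i j, AnalyticAt 𝕜 (M · i j) z₀)
    (hk : ∀ i j, k ≤ analyticOrderAt (M · i j) z₀) (i : l) (j : n) :
    k ≤ analyticOrderAt (fun z => (A z * M z) i j) z₀ := by
  simp only [mul_apply]
  exact le_analyticOrderAt_sum _ fun c _ =>
    le_analyticOrderAt_mul_of_le_right (hA i c) (hM c j) (hk c j)

theorem le_analyticOrderAt_mul_apply_of_left {k : ℕ∞}
    (hA : ∀ i j, AnalyticAt 𝕜 (A · i j) z₀) (hM : ∀ i j, AnalyticAt 𝕜 (M · i j) z₀)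
    (hk : ∀ i j, k ≤ analyticOrderAt (A · i j) z₀) (i : l) (j : n) :
    k ≤ analyticOrderAt (fun z => (A z * M z) i j) z₀ := by
  simp only [mul_apply]
  exact le_analyticOrderAt_sum _ fun c _ =>
    le_analyticOrderAt_mul_of_le_left (hA i c) (hM c j) (hk i c)

end AnalyticEntries

variable {R : Type*} {n : ℕ}

def blockDiagCons [Zero R] (a : R) (A : Matrix (Fin n) (Fin n) R) :
    Matrix (Fin (n + 1)) (Fin (n + 1)) R :=
  of (Fin.cons (Fin.cons a 0) fun i => Fin.cons 0 (A i))

section Zero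

variable [Zero R] (a : R) (A : Matrix (Fin n) (Fin n) R)

@[simp] lemma blockDiagCons_zero_zero : blockDiagCons a A 0 0 = a := rfl

@[simp] lemma blockDiagCons_zero_succ (j : Fin n) : blockDiagCons a A 0 j.succ = 0 := rfl

@[simp] lemma blockDiagCons_succ_zero (i : Fin n) : blockDiagCons a A i.succ 0 = 0 := rfl

@[simp] lemma blockDiagCons_succ_succ (i j : Fin n) :
    blockDiagCons a A i.succ j.succ = A i j := rfl

@[simp] lemma submatrix_succ_succ_blockDiagCons :
    (blockDiagCons a A).submatrix Fin.succ Fin.succ = A := rfl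

lemma eq_blockDiagCons (M : Matrix (Fin (n + 1)) (Fin (n + 1)) R)
    (hcol : ∀ i : Fin n, M i.succ 0 = 0) (hrow : ∀ j : Fin n, M 0 j.succ = 0) :
    M = blockDiagCons (M 0 0) (M.submatrix Fin.succ Fin.succ) := by
  ext i j
  cases i using Fin.cases <;> cases j using Fin.cases <;> simp [hcol, hrow]

lemma diagonal_cons (v : Fin n → R) :
    diagonal (Fin.cons a v : Fin (n + 1) → R) = blockDiagCons a (diagonal v) := by
  ext i j
  cases i using Fin.cases <;> cases j using Fin.cases <;>
    simp [diagonal_apply, Fin.succ_ne_zero, (Fin.succ_ne_zero _).symm]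

end Zero

lemma blockDiagCons_mul [NonUnitalNonAssocSemiring R] (a b : R)
    (A B : Matrix (Fin n) (Fin n) R) :
    blockDiagCons a A * blockDiagCons b B = blockDiagCons (a * b) (A * B) := by
  ext i j
  cases i using Fin.cases <;> cases j using Fin.cases <;> simp [mul_apply, Fin.sum_univ_succ]

lemma det_blockDiagCons [CommRing R] (a : R) (A : Matrix (Fin n) (Fin n) R) :
    (blockDiagCons a A).det = a * A.det := by
  rw [det_succ_column_zero, Fin.sum_univ_succ]
  simp [Fin.succAbove_zero]

section Elimination

variable [Ring R]

def colElim (q : Fin n → R) : Matrix (Fin (n + 1)) (Fin (n + 1)) R :=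
  1 - vecMulVec (Fin.cons 0 q) (Pi.single 0 1)

def rowElim (q : Fin n → R) : Matrix (Fin (n + 1)) (Fin (n + 1)) R :=
  1 - vecMulVec (Pi.single 0 1) (Fin.cons 0 q)

lemma colElim_mul_apply {m : Type*} (q : Fin n → R) (M : Matrix (Fin (n + 1)) m R) (i j) :
    (colElim q * M) i j = M i j - (Fin.cons 0 q : Fin (n + 1) → R) i * M 0 j := by
  rw [colElim, Matrix.sub_mul, Matrix.one_mul, vecMulVec_mul]
  simp [vecMulVec_apply]

lemma mul_rowElim_apply {m : Type*} [Fintype m] (q : Fin n → R) (M : Matrix m (Fin (n + 1)) R)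
    (i j) : (M * rowElim q) i j = M i j - M i 0 * (Fin.cons 0 q : Fin (n + 1) → R) j := by
  rw [rowElim, Matrix.mul_sub, Matrix.mul_one, mul_vecMulVec]
  simp [vecMulVec_apply]

end Elimination

variable [CommRing R]

lemma det_colElim (q : Fin n → R) : (colElim q).det = 1 := by
  rw [colElim, sub_eq_add_neg, ← neg_vecMulVec, vecMulVec_eq Unit,
    det_one_add_replicateCol_mul_replicateRow]
  simp

lemma det_rowElim (q : Fin n → R) : (rowElim q).det = 1 := by
  rw [rowElim, sub_eq_add_neg, ← neg_vecMulVec, vecMulVec_eq Unit,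
    det_one_add_replicateCol_mul_replicateRow]
  simp

theorem colElim_mul_mul_rowElim (M : Matrix (Fin (n + 1)) (Fin (n + 1)) R) {q q' : Fin n → R}
    (hq : ∀ i, M i.succ 0 = q i * M 0 0) (hq' : ∀ j, M 0 j.succ = M 0 0 * q' j) :
    colElim q * M * rowElim q' =
      blockDiagCons (M 0 0) ((colElim q * M * rowElim q').submatrix Fin.succ Fin.succ) := by
  have h00 : (colElim q * M * rowElim q') 0 0 = M 0 0 := by
    simp [mul_rowElim_apply, colElim_mul_apply]
  rw [← h00]
  exact eq_blockDiagCons _ (fun i => by simp [mul_rowElim_apply, colElim_mul_apply, hq])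
    fun j => by simp [mul_rowElim_apply, colElim_mul_apply, hq']

end Matrix

variable {𝕜 : Type*} [NontriviallyNormedField 𝕜] {z₀ : 𝕜}

structure IsAnalyticUnimodularAt {ι : Type*} [Fintype ι] [DecidableEq ι]
    (L : 𝕜 → Matrix ι ι 𝕜) (z₀ : 𝕜) : Prop where
  analyticAt_apply : ∀ i j, AnalyticAt 𝕜 (L · i j) z₀
  exists_eventually_det_eq : ∃ c ≠ 0, ∀ᶠ z in 𝓝 z₀, (L z).det = c

namespace IsAnalyticUnimodularAt

variable {ι : Type*} [Fintype ι] [DecidableEq ι] {A B : 𝕜 → Matrix ι ι 𝕜}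

theorem const {A : Matrix ι ι 𝕜} (hA : A.det ≠ 0) : IsAnalyticUnimodularAt (fun _ => A) z₀ :=
  ⟨fun _ _ => analyticAt_const, A.det, hA, Eventually.of_forall fun _ => rfl⟩

theorem mul (hA : IsAnalyticUnimodularAt A z₀) (hB : IsAnalyticUnimodularAt B z₀) :
    IsAnalyticUnimodularAt (fun z => A z * B z) z₀ := by
  obtain ⟨a, ha, hA_det⟩ := hA.exists_eventually_det_eq
  obtain ⟨b, hb, hB_det⟩ := hB.exists_eventually_det_eq
  refine ⟨analyticAt_mul_apply hA.analyticAt_apply hB.analyticAt_apply, a * b,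
    mul_ne_zero ha hb, ?_⟩
  filter_upwards [hA_det, hB_det] with z hAz hBz
  rw [det_mul, hAz, hBz]

theorem frequently_det_mul_mul_ne_zero (hA : IsAnalyticUnimodularAt A z₀)
    (hB : IsAnalyticUnimodularAt B z₀) {S : 𝕜 → Matrix ι ι 𝕜}
    (hS : ∃ᶠ z in 𝓝 z₀, (S z).det ≠ 0) : ∃ᶠ z in 𝓝 z₀, (A z * S z * B z).det ≠ 0 := by
  obtain ⟨a, ha, hA_det⟩ := hA.exists_eventually_det_eq
  obtain ⟨b, hb, hB_det⟩ := hB.exists_eventually_det_eq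
  refine hS.mp ?_
  filter_upwards [hA_det, hB_det] with z hAz hBz hSz
  rw [det_mul, det_mul, hAz, hBz]
  exact mul_ne_zero (mul_ne_zero ha hSz) hb

theorem blockDiagCons_one {n : ℕ} {L : 𝕜 → Matrix (Fin n) (Fin n) 𝕜}
    (hL : IsAnalyticUnimodularAt L z₀) :
    IsAnalyticUnimodularAt (fun z => blockDiagCons 1 (L z)) z₀ := by
  obtain ⟨c, hc, hL_det⟩ := hL.exists_eventually_det_eq
  refine ⟨fun i j => ?_, c, hc, ?_⟩
  · cases i using Fin.cases <;> cases j using Fin.cases <;>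
      simp only [blockDiagCons_zero_zero, blockDiagCons_zero_succ, blockDiagCons_succ_zero,
        blockDiagCons_succ_succ, analyticAt_const, hL.analyticAt_apply]
  · filter_upwards [hL_det] with z hz
    rw [det_blockDiagCons, hz, one_mul]

end IsAnalyticUnimodularAt

section Elimination

variable {n : ℕ} {q : Fin n → 𝕜 → 𝕜}

theorem isAnalyticUnimodularAt_colElim (hq : ∀ i, AnalyticAt 𝕜 (q i) z₀) :
    IsAnalyticUnimodularAt (fun z => colElim fun i => q i z) z₀ := by
  refine ⟨fun i j => ?_, 1, one_ne_zero, Eventually.of_forall fun z => det_colElim _⟩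
  cases i using Fin.cases <;> cases j using Fin.cases <;>
    simp [colElim, vecMulVec_apply, one_apply] <;> fun_prop

theorem isAnalyticUnimodularAt_rowElim (hq : ∀ i, AnalyticAt 𝕜 (q i) z₀) :
    IsAnalyticUnimodularAt (fun z => rowElim fun i => q i z) z₀ := by
  refine ⟨fun i j => ?_, 1, one_ne_zero, Eventually.of_forall fun z => det_rowElim _⟩
  cases i using Fin.cases <;> cases j using Fin.cases <;>
    simp [rowElim, vecMulVec_apply, one_apply] <;> fun_prop

theorem exists_isAnalyticUnimodularAt_mul_mul_eq_blockDiagCons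
    {S : 𝕜 → Matrix (Fin (n + 1)) (Fin (n + 1)) 𝕜} (hS : ∀ i j, AnalyticAt 𝕜 (S · i j) z₀)
    (hpiv : analyticOrderAt (S · 0 0) z₀ ≠ ⊤)
    (hmin : ∀ i j, analyticOrderAt (S · 0 0) z₀ ≤ analyticOrderAt (S · i j) z₀) :
    ∃ E F : 𝕜 → Matrix (Fin (n + 1)) (Fin (n + 1)) 𝕜,
      IsAnalyticUnimodularAt E z₀ ∧ IsAnalyticUnimodularAt F z₀ ∧
      ∀ᶠ z in 𝓝 z₀, E z * S z * F z =
        blockDiagCons (S z 0 0) ((E z * S z * F z).submatrix Fin.succ Fin.succ) := by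
  choose q hq hq_eq using fun i : Fin n =>
    (hS i.succ 0).exists_eventuallyEq_mul_of_analyticOrderAt_le (hS 0 0) hpiv (hmin _ _)
  choose q' hq' hq'_eq using fun j : Fin n =>
    (hS 0 j.succ).exists_eventuallyEq_mul_of_analyticOrderAt_le (hS 0 0) hpiv (hmin _ _)
  refine ⟨_, _, isAnalyticUnimodularAt_colElim hq, isAnalyticUnimodularAt_rowElim hq', ?_⟩
  filter_upwards [eventually_all.2 hq_eq, eventually_all.2 hq'_eq] with z hcol hrow
  exact colElim_mul_mul_rowElim _ hcol fun j => (hrow j).trans (mul_comm _ _)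

end Elimination

theorem exists_analyticOrderAt_apply_ne_top_le {ι : Type*} [Fintype ι] [DecidableEq ι]
    [Nonempty ι] {S : 𝕜 → Matrix ι ι 𝕜} (hdet : ∃ᶠ z in 𝓝 z₀, (S z).det ≠ 0) :
    ∃ i₀ j₀, analyticOrderAt (S · i₀ j₀) z₀ ≠ ⊤ ∧
      ∀ i j, analyticOrderAt (S · i₀ j₀) z₀ ≤ analyticOrderAt (S · i j) z₀ := by
  obtain ⟨⟨i₀, j₀⟩, -, hmin⟩ := Finset.univ.exists_min_image
    (fun p : ι × ι => analyticOrderAt (S · p.1 p.2) z₀) Finset.univ_nonempty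
  refine ⟨i₀, j₀, fun htop => hdet ?_, fun i j => hmin (i, j) (Finset.mem_univ _)⟩
  have hS_zero : ∀ᶠ z in 𝓝 z₀, ∀ i j, S z i j = 0 := by
    simp only [eventually_all]
    exact fun i j =>
      analyticOrderAt_eq_top.1 (top_le_iff.1 (htop ▸ hmin (i, j) (Finset.mem_univ _)))
  filter_upwards [hS_zero] with z hz
  rw [not_not, show S z = 0 from Matrix.ext hz, det_zero]

variable {n : ℕ}

def HasSmithFormAt (S : 𝕜 → Matrix (Fin n) (Fin n) 𝕜) (z₀ : 𝕜) : Prop :=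
  ∃ (L R : 𝕜 → Matrix (Fin n) (Fin n) 𝕜) (s : Fin n → 𝕜 → 𝕜),
    IsAnalyticUnimodularAt L z₀ ∧ IsAnalyticUnimodularAt R z₀ ∧
    (∀ i, AnalyticAt 𝕜 (s i) z₀ ∧ analyticOrderAt (s i) z₀ ≠ ⊤) ∧
    Monotone (fun i => analyticOrderAt (s i) z₀) ∧
    ∀ᶠ z in 𝓝 z₀, L z * S z * R z = diagonal fun i => s i z

namespace HasSmithFormAt

theorem of_fin_zero (S : 𝕜 → Matrix (Fin 0) (Fin 0) 𝕜) : HasSmithFormAt S z₀ :=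
  ⟨fun _ => 1, fun _ => 1, finZeroElim, .const (by simp), .const (by simp), finZeroElim,
    fun i => i.elim0, Eventually.of_forall fun _ => Subsingleton.elim _ _⟩

theorem congr {S T : 𝕜 → Matrix (Fin n) (Fin n) 𝕜} (h : HasSmithFormAt S z₀)
    (hST : S =ᶠ[𝓝 z₀] T) : HasSmithFormAt T z₀ := by
  obtain ⟨L, R, s, hL, hR, hs, hmono, hLSR⟩ := h
  refine ⟨L, R, s, hL, hR, hs, hmono, ?_⟩
  filter_upwards [hLSR, hST] with z hz hSTz
  rw [← hSTz, hz]

theorem of_mul_mul {S A B : 𝕜 → Matrix (Fin n) (Fin n) 𝕜} (hA : IsAnalyticUnimodularAt A z₀)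
    (hB : IsAnalyticUnimodularAt B z₀) (h : HasSmithFormAt (fun z => A z * S z * B z) z₀) :
    HasSmithFormAt S z₀ := by
  obtain ⟨L, R, s, hL, hR, hs, hmono, hLSR⟩ := h
  refine ⟨fun z => L z * A z, fun z => B z * R z, s, hL.mul hA, hB.mul hR, hs, hmono, ?_⟩
  filter_upwards [hLSR] with z hz
  simpa only [Matrix.mul_assoc] using hz

theorem blockDiagCons {p : 𝕜 → 𝕜} {B : 𝕜 → Matrix (Fin n) (Fin n) 𝕜}
    (hp : AnalyticAt 𝕜 p z₀) (hp_top : analyticOrderAt p z₀ ≠ ⊤)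
    (hB : ∀ i j, AnalyticAt 𝕜 (B · i j) z₀)
    (hpB : ∀ i j, analyticOrderAt p z₀ ≤ analyticOrderAt (B · i j) z₀)
    (h : HasSmithFormAt B z₀) : HasSmithFormAt (fun z => blockDiagCons (p z) (B z)) z₀ := by
  obtain ⟨L, R, s, hL, hR, hs, hmono, hLBR⟩ := h
  have hps (i : Fin n) : analyticOrderAt p z₀ ≤ analyticOrderAt (s i) z₀ := by
    refine (le_analyticOrderAt_mul_apply_of_left (analyticAt_mul_apply hL.analyticAt_apply hB)
      hR.analyticAt_apply (le_analyticOrderAt_mul_apply_of_right hL.analyticAt_apply hB hpB) i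
        i).trans_eq (analyticOrderAt_congr ?_)
    filter_upwards [hLBR] with z hz
    simp [hz]
  refine ⟨fun z => Matrix.blockDiagCons 1 (L z), fun z => Matrix.blockDiagCons 1 (R z),
    Fin.cons p s, hL.blockDiagCons_one, hR.blockDiagCons_one, Fin.cases ⟨hp, hp_top⟩ hs, ?_, ?_⟩
  · show Monotone ((analyticOrderAt · z₀) ∘ Fin.cons p s)
    rw [Fin.comp_cons]
    exact Fin.monotone_cons hmono hps
  · filter_upwards [hLBR] with z hz
    show _ = diagonal ((· z) ∘ Fin.cons p s)
    rw [blockDiagCons_mul, blockDiagCons_mul, hz, one_mul, mul_one, Fin.comp_cons,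
      diagonal_cons]
    rfl

theorem of_pivot {S : 𝕜 → Matrix (Fin (n + 1)) (Fin (n + 1)) 𝕜}
    (hS : ∀ i j, AnalyticAt 𝕜 (S · i j) z₀) (hpiv : analyticOrderAt (S · 0 0) z₀ ≠ ⊤)
    (hmin : ∀ i j, analyticOrderAt (S · 0 0) z₀ ≤ analyticOrderAt (S · i j) z₀)
    (hdet : ∃ᶠ z in 𝓝 z₀, (S z).det ≠ 0)
    (ih : ∀ T : 𝕜 → Matrix (Fin n) (Fin n) 𝕜, (∀ i j, AnalyticAt 𝕜 (T · i j) z₀) →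
      (∃ᶠ z in 𝓝 z₀, (T z).det ≠ 0) → HasSmithFormAt T z₀) :
    HasSmithFormAt S z₀ := by
  obtain ⟨E, F, hE, hF, hESF⟩ :=
    exists_isAnalyticUnimodularAt_mul_mul_eq_blockDiagCons hS hpiv hmin
  set B := fun z => (E z * S z * F z).submatrix Fin.succ Fin.succ
  have hES := analyticAt_mul_apply hE.analyticAt_apply hS
  have hB (i j : Fin n) : AnalyticAt 𝕜 (B · i j) z₀ :=
    analyticAt_mul_apply hES hF.analyticAt_apply _ _
  have hSB (i j : Fin n) : analyticOrderAt (S · 0 0) z₀ ≤ analyticOrderAt (B · i j) z₀ :=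
    le_analyticOrderAt_mul_apply_of_left hES hF.analyticAt_apply
      (le_analyticOrderAt_mul_apply_of_right hE.analyticAt_apply hS hmin) _ _
  have hB_det : ∃ᶠ z in 𝓝 z₀, (B z).det ≠ 0 := by
    refine (hE.frequently_det_mul_mul_ne_zero hF hdet).mp ?_
    filter_upwards [hESF] with z hz hdet_z
    rw [hz, det_blockDiagCons] at hdet_z
    exact right_ne_zero_of_mul hdet_z
  refine of_mul_mul hE hF ((blockDiagCons (hS 0 0) hpiv hB hSB (ih B hB hB_det)).congr ?_)
  filter_upwards [hESF] with z hz using hz.symm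

theorem of_frequently_det_ne_zero :
    ∀ {n : ℕ} {S : 𝕜 → Matrix (Fin n) (Fin n) 𝕜}, (∀ i j, AnalyticAt 𝕜 (S · i j) z₀) →
      (∃ᶠ z in 𝓝 z₀, (S z).det ≠ 0) → HasSmithFormAt S z₀
  | 0, S, _, _ => of_fin_zero S
  | n + 1, S, hS, hdet => by
    obtain ⟨i₀, j₀, hpiv, hmin⟩ := exists_analyticOrderAt_apply_ne_top_le hdet
    have hP := IsAnalyticUnimodularAt.const (z₀ := z₀)
      (det_ne_zero_of_left_inverse (swap_mul_self (R := 𝕜) 0 i₀))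
    have hQ := IsAnalyticUnimodularAt.const (z₀ := z₀)
      (det_ne_zero_of_left_inverse (swap_mul_self (R := 𝕜) 0 j₀))
    have hPS := analyticAt_mul_apply hP.analyticAt_apply hS
    have h00 : (fun z => (swap 𝕜 0 i₀ * S z * swap 𝕜 0 j₀) 0 0) = (S · i₀ j₀) := by
      simp
    refine of_mul_mul hP hQ (of_pivot (analyticAt_mul_apply hPS hQ.analyticAt_apply)
      (h00 ▸ hpiv) (fun i j => h00 ▸ ?_) (hP.frequently_det_mul_mul_ne_zero hQ hdet)
      fun T hT hT_det => of_frequently_det_ne_zero hT hT_det)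
    exact le_analyticOrderAt_mul_apply_of_left hPS hQ.analyticAt_apply
      (le_analyticOrderAt_mul_apply_of_right hP.analyticAt_apply hS hmin) i j

end HasSmithFormAt

theorem stmt8_general (n : ℕ) (S : ℂ → Matrix (Fin n) (Fin n) ℂ)
    (hS : ∀ i j, AnalyticAt ℂ (fun z => S z i j) 0)
    (hinv : ∃ ε > (0 : ℝ), ∀ z : ℂ, z ≠ 0 → ‖z‖ < ε → IsUnit (S z)) :
    ∃ (L R : ℂ → Matrix (Fin n) (Fin n) ℂ) (s : Fin n → ℂ → ℂ)
      (cL cR : ℂ) (d : Fin n → ℕ),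
      (∀ i j, AnalyticAt ℂ (fun z => L z i j) 0) ∧
      (∀ i j, AnalyticAt ℂ (fun z => R z i j) 0) ∧
      cL ≠ 0 ∧ cR ≠ 0 ∧
      (∀ᶠ z in 𝓝 (0 : ℂ), (L z).det = cL) ∧
      (∀ᶠ z in 𝓝 (0 : ℂ), (R z).det = cR) ∧
      (∀ i, AnalyticAt ℂ (s i) 0) ∧
      (∀ i, ∃ u : ℂ → ℂ, AnalyticAt ℂ u 0 ∧ u 0 ≠ 0 ∧
        ∀ᶠ z in 𝓝 (0 : ℂ), s i z = z ^ d i * u z) ∧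
      Monotone d ∧
      (∀ᶠ z in 𝓝 (0 : ℂ), L z * S z * R z = Matrix.diagonal (fun i => s i z)) := by
  obtain ⟨ε, hε, hS_unit⟩ := hinv
  have hdet : ∃ᶠ z in 𝓝 (0 : ℂ), (S z).det ≠ 0 := by
    refine (Eventually.frequently (f := 𝓝[≠] (0 : ℂ)) ?_).filter_mono nhdsWithin_le_nhds
    filter_upwards [self_mem_nhdsWithin, nhdsWithin_le_nhds (Metric.ball_mem_nhds 0 hε)]
      with z hz0 hzε
    exact ((isUnit_iff_isUnit_det _).1 (hS_unit z hz0 (mem_ball_zero_iff.1 hzε))).ne_zero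
  obtain ⟨L, R, s, ⟨hL, cL, hcL, hL_det⟩, ⟨hR, cR, hcR, hR_det⟩, hs, hmono, hLSR⟩ :=
    HasSmithFormAt.of_frequently_det_ne_zero hS hdet
  refine ⟨L, R, s, cL, cR, fun i => analyticOrderNatAt (s i) 0, hL, hR, hcL, hcR, hL_det,
    hR_det, fun i => (hs i).1, fun i => ?_, fun i j hij => ENat.toNat_le_toNat (hmono hij) (hs j).2,
    hLSR⟩
  obtain ⟨u, hu, hu0, hsu⟩ := (hs i).1.analyticOrderAt_ne_top.1 (hs i).2
  exact ⟨u, hu, hu0, by simpa [EventuallyEq] using hsu⟩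

/-- Smith-type normal form for an analytic matrix-valued function: if `S : ℂ → Mₙ(ℂ)` is
analytic near `0` and `S z` is invertible for `0 < |z| < ε`, then there are analytic
matrix functions `L, R` near `0` with constant nonzero determinants such that
`L z * S z * R z = diag(s₁ z, …, s_n z)` near `0`, where each `s_i` is analytic near `0`,
not identically zero (indeed `s_i z = z^{d_i}·u_i z` with `u_i` analytic, `u_i 0 ≠ 0`),
and the vanishing orders `d_1 ≤ d_2 ≤ … ≤ d_n` are increasing. -/
theorem stmt8 (n : ℕ) (hn : 1 ≤ n) (S : ℂ → Matrix (Fin n) (Fin n) ℂ)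
    (hS : ∀ i j, AnalyticAt ℂ (fun z => S z i j) 0)
    (hinv : ∃ ε > (0 : ℝ), ∀ z : ℂ, z ≠ 0 → ‖z‖ < ε → IsUnit (S z)) :
    ∃ (L R : ℂ → Matrix (Fin n) (Fin n) ℂ) (s : Fin n → ℂ → ℂ)
      (cL cR : ℂ) (d : Fin n → ℕ),
      (∀ i j, AnalyticAt ℂ (fun z => L z i j) 0) ∧
      (∀ i j, AnalyticAt ℂ (fun z => R z i j) 0) ∧
      cL ≠ 0 ∧ cR ≠ 0 ∧
      (∀ᶠ z in 𝓝 (0 : ℂ), (L z).det = cL) ∧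
      (∀ᶠ z in 𝓝 (0 : ℂ), (R z).det = cR) ∧
      (∀ i, AnalyticAt ℂ (s i) 0) ∧
      (∀ i, ∃ u : ℂ → ℂ, AnalyticAt ℂ u 0 ∧ u 0 ≠ 0 ∧
        ∀ᶠ z in 𝓝 (0 : ℂ), s i z = z ^ d i * u z) ∧
      Monotone d ∧
      (∀ᶠ z in 𝓝 (0 : ℂ), L z * S z * R z = Matrix.diagonal (fun i => s i z)) :=
  stmt8_general n S hS hinv
end

section
/- In addition to the hypotheses on S, let B be a nondegenerate symmetric bilinear form on ℂⁿ satisfying B(S(z)v, w) = B(v, S(z)w) for all v, w ∈ ℂⁿ and all z in a neighborhood of 0. Then for every k ∈ ℕ and every v ∈ V_k^S the following are equivalent: (a) v ∈ V_{k+1}^S; (b) for every w ∈ V_k^S and all functions f, g : ℂ → ℂⁿ analytic near 0 with f(0) = v and g(0) = w, such that both z ↦ S(z)f(z) and z ↦ S(z)g(z) vanish to order ≥ k at 0, one has lim_{z→0} z^{−k}·B(S(z)f(z), g(z)) = 0. (In other words, the induced bilinear form ⟨v,w⟩_k on V_k^S is well defined and its radical equals exactly V_{k+1}^S, so it is nondegenerate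 on V_k^S/V_{k+1}^S.) -/
/-
For `v ∈ V_{k+1}` and `w ∈ V_k`, with `S f = z^k F` and `S g = z^k G`, the self-adjointness of
`S(z)` gives `z^{-k} B(S f, g) = z^{-k} B(S g, f) → B(G 0, v)`; computing the same limit through a
witness `S f₀ = z^{k+1} h₀` of `v ∈ V_{k+1}` gives `0`.

Conversely, if `S f = z^k h` then the limit is `B(h 0, w)`, so `h 0` is `B`-orthogonal to `V_k`,
and it suffices to find `u` with `S u = z^{k-1} G`, `G 0 = h 0`: then `f - z u` witnesses
`v ∈ V_{k+1}`. This `u` comes from linear algebra on `k`-jets `Fin k → ℂⁿ`. Multiplication by `S`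
followed by truncation mod `z^k` is a linear map `T`, self-adjoint for the nondegenerate pairing
`⟨a, b⟩ = [z^{k-1}] B(a(z), b(z))`. Constant terms of jets in `ker T` lie in `V_k`, so
`h 0 · z^{k-1} ∈ (ker T)^⊥ = range T`.
-/

open Filter Topology Matrix

/-- `V_k^S`: the set of vectors `f 0`, where `f` is analytic near `0` and `S z *ᵥ f z`
vanishes to order at least `k` at `0`. -/
def VkSet {n : ℕ} (S : ℂ → Matrix (Fin n) (Fin n) ℂ) (k : ℕ) : Set (Fin n → ℂ) :=
  {v | ∃ f g : ℂ → Fin n → ℂ,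
    (∀ i, AnalyticAt ℂ (fun z => f z i) 0) ∧
    (∀ i, AnalyticAt ℂ (fun z => g z i) 0) ∧
    f 0 = v ∧
    ∀ᶠ z in 𝓝 (0 : ℂ), S z *ᵥ f z = z ^ k • g z}

theorem LinearMap.BilinForm.orthogonal_ker_eq_range {K V : Type*} [Field K] [AddCommGroup V]
    [Module K V] [FiniteDimensional K V] {φ : LinearMap.BilinForm K V} (hφ : φ.Nondegenerate)
    (hφ' : φ.IsRefl) {T : V →ₗ[K] V} (hT : LinearMap.IsAdjointPair φ φ T T) :
    φ.orthogonal (LinearMap.ker T) = LinearMap.range T := by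
  have : LinearMap.ker T = φ.orthogonal (LinearMap.range T) := by
    ext b
    simp only [LinearMap.mem_ker, mem_orthogonal_iff, LinearMap.mem_range, forall_exists_index,
      forall_apply_eq_imp_iff, hT _ b]
    exact ⟨fun h a => by simp [h], hφ.2 _⟩
  rw [this, orthogonal_orthogonal hφ hφ']

theorem ContinuousAt.bilinForm_apply {𝕜 E X : Type*} [NontriviallyNormedField 𝕜] [CompleteSpace 𝕜]
    [NormedAddCommGroup E] [NormedSpace 𝕜 E] [FiniteDimensional 𝕜 E] [TopologicalSpace X]
    (B : LinearMap.BilinForm 𝕜 E) {f g : X → E} {x : X}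
    (hf : ContinuousAt f x) (hg : ContinuousAt g x) : ContinuousAt (fun y => B (f y) (g y)) x := by
  show ContinuousAt (fun y => B.toContinuousBilinearMap (f y) (g y)) x
  fun_prop

theorem AnalyticAt.dslope {𝕜 E : Type*} [NontriviallyNormedField 𝕜] [NormedAddCommGroup E]
    [NormedSpace 𝕜 E] {F : 𝕜 → E} {z₀ : 𝕜} (hF : AnalyticAt 𝕜 F z₀) :
    AnalyticAt 𝕜 (dslope F z₀) z₀ :=
  let ⟨_, hp⟩ := hF; ⟨_, hp.has_fpower_series_dslope_fslope⟩

section JetPairing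

variable {𝕜 E : Type*} [Field 𝕜] [AddCommGroup E] [Module 𝕜 E] {k : ℕ}
  (B : LinearMap.BilinForm 𝕜 E)

/-- The coefficient of `z ^ (k - 1)` in `B (jetEval z a) (jetEval z b)`,
see `coeff_jetPairingPoly_pred`. -/
noncomputable def jetPairing : LinearMap.BilinForm 𝕜 (Fin k → E) :=
  ∑ j : Fin k, B.compl₁₂ (LinearMap.proj j) (LinearMap.proj j.rev)

theorem jetPairing_apply (a b : Fin k → E) : jetPairing B a b = ∑ j, B (a j) (b j.rev) := by
  simp [jetPairing]

theorem jetPairing_single_left (i : Fin k) (x : E) (b : Fin k → E) :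
    jetPairing B (Pi.single i x) b = B x (b i.rev) := by
  rw [jetPairing_apply, Finset.sum_eq_single i] <;> simp_all

theorem jetPairing_isSymm (hB : B.IsSymm) : (jetPairing (k := k) B).IsSymm := by
  refine ⟨fun a b => ?_⟩
  simp only [jetPairing_apply]
  exact Fintype.sum_equiv Fin.revPerm _ _ fun j => by simp [hB.eq (a _)]

theorem jetPairing_nondegenerate (hB : B.IsSymm) (hB' : B.SeparatingLeft) :
    (jetPairing (k := k) B).Nondegenerate := by
  refine ((jetPairing_isSymm B hB).isRefl.nondegenerate_iff_separatingRight).2 fun b hb => ?_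
  funext j
  refine hB' _ fun x => ?_
  have := hb (Pi.single j.rev x)
  rwa [jetPairing_single_left, Fin.rev_rev, hB.eq] at this

end JetPairing

section Jet

variable {𝕜 E : Type*} [NontriviallyNormedField 𝕜] [NormedAddCommGroup E] [NormedSpace 𝕜 E]
  {k m : ℕ}

noncomputable def jetEval (z : 𝕜) : (Fin k → E) →ₗ[𝕜] E :=
  ∑ j : Fin k, z ^ (j : ℕ) • LinearMap.proj j

theorem jetEval_apply (z : 𝕜) (a : Fin k → E) : jetEval z a = ∑ j : Fin k, z ^ (j : ℕ) • a j := by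
  simp [jetEval]

theorem jetEval_cons (z : 𝕜) (x : E) (a : Fin k → E) :
    jetEval z (Fin.cons x a) = x + z • jetEval z a := by
  simp [jetEval_apply, Fin.sum_univ_succ, Finset.smul_sum, smul_smul, pow_succ']

theorem jetEval_zero (a : Fin (k + 1) → E) : jetEval (0 : 𝕜) a = a 0 := by
  simpa using jetEval_cons (0 : 𝕜) (a 0) (Fin.tail a)

theorem jetEval_single (z : 𝕜) (i : Fin k) (x : E) :
    jetEval z (Pi.single i x) = z ^ (i : ℕ) • x := by
  rw [jetEval_apply, Finset.sum_eq_single i] <;> simp_all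

theorem continuous_jetEval (a : Fin k → E) : Continuous fun z : 𝕜 => jetEval z a := by
  simp only [jetEval_apply]; fun_prop

theorem analyticAt_jetEval (a : Fin k → E) (z₀ : 𝕜) : AnalyticAt 𝕜 (fun z => jetEval z a) z₀ := by
  simp only [jetEval_apply]
  exact Finset.analyticAt_fun_sum _ fun j _ => (analyticAt_id.pow _).smul analyticAt_const

theorem AnalyticAt.exists_eq_jetEval_add_pow_smul {F : 𝕜 → E} (hF : AnalyticAt 𝕜 F 0) (k : ℕ) :
    ∃ (a : Fin k → E) (G : 𝕜 → E), AnalyticAt 𝕜 G 0 ∧ ∀ z, F z = jetEval z a + z ^ k • G z := by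
  induction k generalizing F with
  | zero => exact ⟨0, F, hF, fun z => by simp [jetEval_apply]⟩
  | succ k ih =>
    obtain ⟨a, G, hG, hFG⟩ := ih hF.dslope
    refine ⟨Fin.cons (F 0) a, G, hG, fun z => ?_⟩
    have hslope := sub_smul_dslope F 0 z
    rw [sub_zero, hFG] at hslope
    rw [jetEval_cons, pow_succ', mul_smul, add_assoc, ← smul_add, hslope]
    abel

theorem coeff_eq_zero_of_jetEval_eq_pow_smul {c : Fin m → E} {G : 𝕜 → E} (hG : ContinuousAt G 0)
    (h : ∀ᶠ z in 𝓝[≠] 0, jetEval z c = z ^ k • G z) (j : Fin m) (hj : (j : ℕ) < k) :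
    c j = 0 := by
  induction k generalizing m with
  | zero => omega
  | succ k ih =>
    cases m with
    | zero => exact j.elim0
    | succ m =>
      have hc0 : c 0 = 0 := by
        have h1 : Tendsto (fun z : 𝕜 => z ^ (k + 1) • G z) (𝓝[≠] 0) (𝓝 0) := by
          have : ContinuousAt (fun z : 𝕜 => z ^ (k + 1) • G z) 0 := (continuousAt_id.pow _).smul hG
          simpa using this.tendsto.mono_left nhdsWithin_le_nhds
        have h2 : Tendsto (fun z : 𝕜 => jetEval z c) (𝓝[≠] 0) (𝓝 (c 0)) := by
          rw [← jetEval_zero (𝕜 := 𝕜) c]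
          exact (continuous_jetEval c).continuousWithinAt
        exact tendsto_nhds_unique (h2.congr' h) h1
      have htail : ∀ᶠ z in 𝓝[≠] 0, jetEval z (Fin.tail c) = z ^ k • G z := by
        filter_upwards [h, self_mem_nhdsWithin] with z hz hz0
        rw [← Fin.cons_self_tail c, jetEval_cons, hc0, zero_add, pow_succ', mul_smul] at hz
        exact smul_right_injective E hz0 hz
      rcases Fin.eq_zero_or_eq_succ j with rfl | ⟨j, rfl⟩
      · exact hc0
      · exact ih htail j (by simpa using hj)

theorem eq_of_jetEval_add_pow_smul_eq {a b : Fin k → E} {G G' : 𝕜 → E} (hG : ContinuousAt G 0)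
    (hG' : ContinuousAt G' 0)
    (h : ∀ᶠ z in 𝓝[≠] 0, jetEval z a + z ^ k • G z = jetEval z b + z ^ k • G' z) :
    a = b := by
  refine sub_eq_zero.1 (funext fun j =>
    coeff_eq_zero_of_jetEval_eq_pow_smul (G := fun z => G' z - G z) (hG'.sub hG) ?_ j j.isLt)
  filter_upwards [h] with z hz
  rw [map_sub, smul_sub]
  linear_combination (norm := module) hz

open Polynomial in
theorem Polynomial.coeff_eq_zero_of_eval_eq_pow_mul {p : 𝕜[X]} {R : 𝕜 → 𝕜} (hR : ContinuousAt R 0)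
    (h : ∀ᶠ z in 𝓝[≠] 0, p.eval z = z ^ k * R z) {j : ℕ} (hj : j < k) : p.coeff j = 0 := by
  by_cases hjp : j < p.natDegree + 1
  · refine coeff_eq_zero_of_jetEval_eq_pow_smul (c := fun i : Fin (p.natDegree + 1) => p.coeff i)
      hR ?_ ⟨j, hjp⟩ hj
    filter_upwards [h] with z hz
    rw [jetEval_apply, smul_eq_mul, ← hz, eval_eq_sum_range, ← Fin.sum_univ_eq_sum_range]
    simp only [smul_eq_mul, mul_comm]
  · exact coeff_eq_zero_of_natDegree_lt (by omega)

variable (B : LinearMap.BilinForm 𝕜 E)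

open Polynomial in
/-- The coefficient of `z ^ (k - 1)` in `B (jetEval z a) (jetEval z b)`,
see `coeff_jetPairingPoly_pred`. -/
noncomputable def jetPairingPoly (a b : Fin k → E) : 𝕜[X] :=
  ∑ i : Fin k, ∑ j : Fin k, monomial (i + j : ℕ) (B (a i) (b j))

theorem eval_jetPairingPoly (a b : Fin k → E) (z : 𝕜) :
    (jetPairingPoly B a b).eval z = B (jetEval z a) (jetEval z b) := by
  simp only [jetPairingPoly, jetEval_apply, Polynomial.eval_finsetSum, Polynomial.eval_monomial,
    map_sum, LinearMap.sum_apply, map_smul, LinearMap.smul_apply, smul_eq_mul, pow_add,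
    Finset.mul_sum]
  rw [Finset.sum_comm]
  exact Finset.sum_congr rfl fun i _ => Finset.sum_congr rfl fun j _ => by ring

theorem coeff_jetPairingPoly_pred (a b : Fin k → E) :
    (jetPairingPoly B a b).coeff (k - 1) = jetPairing B a b := by
  simp only [jetPairingPoly, Polynomial.finsetSum_coeff, Polynomial.coeff_monomial,
    jetPairing_apply]
  refine Finset.sum_congr rfl fun i _ => ?_
  rw [Finset.sum_eq_single i.rev]
  · rw [if_pos (by rw [Fin.val_rev]; omega)]
  · intro j _ hj
    rw [if_neg]
    contrapose! hj
    ext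
    rw [Fin.val_rev]
    omega
  · simp

theorem jetPairing_eq_of_sub_eq_pow_mul (hk : 0 < k) {a b a' b' : Fin k → E} {R : 𝕜 → 𝕜}
    (hR : ContinuousAt R 0)
    (h : ∀ᶠ z in 𝓝[≠] 0,
      B (jetEval z a) (jetEval z b) - B (jetEval z a') (jetEval z b') = z ^ k * R z) :
    jetPairing B a b = jetPairing B a' b' := by
  rw [← coeff_jetPairingPoly_pred, ← coeff_jetPairingPoly_pred, ← sub_eq_zero,
    ← Polynomial.coeff_sub]
  refine Polynomial.coeff_eq_zero_of_eval_eq_pow_mul (k := k) hR ?_ (by omega)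
  simpa only [Polynomial.eval_sub, eval_jetPairingPoly] using h

end Jet

section Operator

variable {𝕜 E : Type*} [NontriviallyNormedField 𝕜] [NormedAddCommGroup E] [NormedSpace 𝕜 E]
  {k : ℕ} {L : 𝕜 → E →ₗ[𝕜] E}

theorem analyticAt_apply_jetEval (hL : ∀ v, AnalyticAt 𝕜 (fun z => L z v) 0) (a : Fin k → E) :
    AnalyticAt 𝕜 (fun z => L z (jetEval z a)) 0 := by
  simp only [jetEval_apply, map_sum, map_smul]
  exact Finset.analyticAt_fun_sum _ fun j _ => (analyticAt_id.pow _).smul (hL _)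

theorem exists_jetOperator (hL : ∀ v, AnalyticAt 𝕜 (fun z => L z v) 0) (k : ℕ) :
    ∃ T : (Fin k → E) →ₗ[𝕜] (Fin k → E), ∀ a, ∃ G : 𝕜 → E, AnalyticAt 𝕜 G 0 ∧
      ∀ z, L z (jetEval z a) = jetEval z (T a) + z ^ k • G z := by
  choose T G hG hT using fun a : Fin k → E =>
    (analyticAt_apply_jetEval hL a).exists_eq_jetEval_add_pow_smul k
  have unique {a b : Fin k → E} {G' : 𝕜 → E} (hG' : ContinuousAt G' 0)
      (h : ∀ z, L z (jetEval z a) = jetEval z b + z ^ k • G' z) : T a = b :=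
    eq_of_jetEval_add_pow_smul_eq (hG a).continuousAt hG'
      (.of_forall fun z => (hT a z).symm.trans (h z))
  refine ⟨{ toFun := T
            map_add' := fun a b => unique ((hG a).continuousAt.add (hG b).continuousAt) fun z => ?_
            map_smul' := fun c a => unique ((hG a).continuousAt.const_smul c) fun z => ?_ },
    fun a => ⟨G a, hG a, hT a⟩⟩
  · rw [map_add, map_add, hT, hT, map_add, Pi.add_apply, smul_add]
    abel
  · rw [map_smul, map_smul, hT, map_smul, smul_add, Pi.smul_apply, smul_comm, RingHom.id_apply]

theorem isAdjointPair_jetPairing [CompleteSpace 𝕜] [FiniteDimensional 𝕜 E]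
    (B : LinearMap.BilinForm 𝕜 E) (hLB : ∀ᶠ z in 𝓝 0, LinearMap.IsAdjointPair B B (L z) (L z))
    (hk : 0 < k) {T : (Fin k → E) →ₗ[𝕜] (Fin k → E)}
    (hT : ∀ a, ∃ G : 𝕜 → E, ContinuousAt G 0 ∧
      ∀ z, L z (jetEval z a) = jetEval z (T a) + z ^ k • G z) :
    LinearMap.IsAdjointPair (jetPairing B) (jetPairing B) T T := by
  intro a b
  obtain ⟨Ga, hGa, hTa⟩ := hT a
  obtain ⟨Gb, hGb, hTb⟩ := hT b
  refine jetPairing_eq_of_sub_eq_pow_mul B hk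
    (R := fun z => B (jetEval z a) (Gb z) - B (Ga z) (jetEval z b))
    (((continuous_jetEval a).continuousAt.bilinForm_apply B hGb).sub
      (hGa.bilinForm_apply B (continuous_jetEval b).continuousAt)) ?_
  filter_upwards [hLB.filter_mono nhdsWithin_le_nhds] with z hz
  have := hz (jetEval z a) (jetEval z b)
  rw [hTa, hTb] at this
  simp only [map_add, map_smul, LinearMap.add_apply, LinearMap.smul_apply, smul_eq_mul] at this
  linear_combination this

end Operator

theorem tendsto_inv_pow_mul_of_eq_pow_smul {𝕜 E : Type*} [NontriviallyNormedField 𝕜]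
    [CompleteSpace 𝕜] [NormedAddCommGroup E] [NormedSpace 𝕜 E] [FiniteDimensional 𝕜 E]
    (B : LinearMap.BilinForm 𝕜 E) {k : ℕ} {Φ F g : 𝕜 → E}
    (hΦ : ∀ᶠ z in 𝓝 0, Φ z = z ^ k • F z) (hF : ContinuousAt F 0) (hg : ContinuousAt g 0) :
    Tendsto (fun z => (z ^ k)⁻¹ * B (Φ z) (g z)) (𝓝[≠] 0) (𝓝 (B (F 0) (g 0))) := by
  refine ((hF.bilinForm_apply B hg).tendsto.mono_left nhdsWithin_le_nhds).congr' ?_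
  filter_upwards [hΦ.filter_mono nhdsWithin_le_nhds, self_mem_nhdsWithin] with z hz hz0
  rw [hz, map_smul, LinearMap.smul_apply, smul_eq_mul, inv_mul_cancel_left₀ (pow_ne_zero k hz0)]

section VkSet

variable {n k : ℕ} {S : ℂ → Matrix (Fin n) (Fin n) ℂ} {B : LinearMap.BilinForm ℂ (Fin n → ℂ)}

theorem mem_VkSet_iff {v : Fin n → ℂ} :
    v ∈ VkSet S k ↔ ∃ f g : ℂ → Fin n → ℂ, AnalyticAt ℂ f 0 ∧ AnalyticAt ℂ g 0 ∧ f 0 = v ∧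
      ∀ᶠ z in 𝓝 0, S z *ᵥ f z = z ^ k • g z := by
  simp only [VkSet, Set.mem_ofPred_eq]
  exact exists₂_congr fun f g => by rw [analyticAt_pi_iff, analyticAt_pi_iff]

theorem analyticAt_mulVec_const (hS : ∀ i j, AnalyticAt ℂ (fun z => S z i j) 0)
    (v : Fin n → ℂ) : AnalyticAt ℂ (fun z => S z *ᵥ v) 0 :=
  analyticAt_pi_iff.2 fun i => by
    simp only [mulVec, dotProduct]
    exact Finset.analyticAt_fun_sum _ fun j _ => (hS i j).fun_mul analyticAt_const

theorem mem_VkSet_zero (hS : ∀ i j, AnalyticAt ℂ (fun z => S z i j) 0) (v : Fin n → ℂ) :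
    v ∈ VkSet S 0 :=
  mem_VkSet_iff.2 ⟨fun _ => v, fun z => S z *ᵥ v, analyticAt_const, analyticAt_mulVec_const hS v,
    rfl, .of_forall fun z => by simp⟩

theorem eventually_inv_pow_mul_B_mulVec_comm (hB : B.IsSymm)
    (hcompat : ∀ᶠ z in 𝓝 (0 : ℂ), ∀ v w, B (S z *ᵥ v) w = B v (S z *ᵥ w)) (f g : ℂ → Fin n → ℂ) :
    ∀ᶠ z in 𝓝[≠] 0, (z ^ k)⁻¹ * B (S z *ᵥ g z) (f z) = (z ^ k)⁻¹ * B (S z *ᵥ f z) (g z) := by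
  filter_upwards [hcompat.filter_mono nhdsWithin_le_nhds] with z hz
  rw [hz, hB.eq]

theorem B_eq_zero_of_mulVec_eq_pow_succ_smul (hB : B.IsSymm)
    (hcompat : ∀ᶠ z in 𝓝 (0 : ℂ), ∀ v w, B (S z *ᵥ v) w = B v (S z *ᵥ w))
    {f h g G : ℂ → Fin n → ℂ} (hf : ContinuousAt f 0) (hh : ContinuousAt h 0)
    (hg : ContinuousAt g 0) (hG : ContinuousAt G 0)
    (hSf : ∀ᶠ z in 𝓝 0, S z *ᵥ f z = z ^ (k + 1) • h z)
    (hSg : ∀ᶠ z in 𝓝 0, S z *ᵥ g z = z ^ k • G z) :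
    B (G 0) (f 0) = 0 := by
  have hSf' : ∀ᶠ z in 𝓝 0, S z *ᵥ f z = z ^ k • (z • h z) := by
    simpa only [pow_succ, mul_smul] using hSf
  have hlim := tendsto_inv_pow_mul_of_eq_pow_smul B (F := fun z => z • h z) hSf'
    (continuousAt_id.smul hh) hg
  rw [zero_smul, map_zero, LinearMap.zero_apply] at hlim
  exact tendsto_nhds_unique (tendsto_inv_pow_mul_of_eq_pow_smul B hSg hG hf)
    (hlim.congr' (eventually_inv_pow_mul_B_mulVec_comm hB hcompat g f))

theorem exists_smul_mulVec_eq_pow_smul (hS : ∀ i j, AnalyticAt ℂ (fun z => S z i j) 0)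
    (hB : B.IsSymm) (hB' : B.SeparatingLeft)
    (hcompat : ∀ᶠ z in 𝓝 (0 : ℂ), ∀ v w, B (S z *ᵥ v) w = B v (S z *ᵥ w))
    {x : Fin n → ℂ} (hx : ∀ w ∈ VkSet S k, B x w = 0) :
    ∃ u H : ℂ → Fin n → ℂ, AnalyticAt ℂ u 0 ∧ AnalyticAt ℂ H 0 ∧ H 0 = x ∧
      ∀ᶠ z in 𝓝 0, S z *ᵥ (z • u z) = z ^ k • H z := by
  cases k with
  | zero =>
    obtain rfl : x = 0 := hB' x fun w => hx w (mem_VkSet_zero hS w)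
    exact ⟨0, 0, analyticAt_const, analyticAt_const, rfl, .of_forall fun z => by simp⟩
  | succ m =>
    obtain ⟨T, hT⟩ := exists_jetOperator (L := fun z => (S z).mulVecLin)
      (analyticAt_mulVec_const hS) (m + 1)
    have hadj := isAdjointPair_jetPairing (L := fun z => (S z).mulVecLin) B hcompat m.succ_pos
      fun a => let ⟨G, hG, h⟩ := hT a; ⟨G, hG.continuousAt, h⟩
    have hker : ∀ a ∈ LinearMap.ker T, a 0 ∈ VkSet S (m + 1) := fun a ha =>
      let ⟨G, hG, h⟩ := hT a
      mem_VkSet_iff.2 ⟨fun z => jetEval z a, G, analyticAt_jetEval a 0, hG, jetEval_zero a,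
        .of_forall fun z => by simpa [LinearMap.mem_ker.1 ha] using h z⟩
    have hx' : Pi.single (Fin.last m) x ∈ (jetPairing B).orthogonal (LinearMap.ker T) :=
      fun a ha => by
        rw [(jetPairing_isSymm B hB).eq, jetPairing_single_left, Fin.rev_last]
        exact hx _ (hker a ha)
    rw [LinearMap.BilinForm.orthogonal_ker_eq_range (jetPairing_nondegenerate B hB hB')
      (jetPairing_isSymm B hB).isRefl hadj] at hx'
    obtain ⟨u, hu⟩ := hx'
    obtain ⟨G, hG, hSu⟩ := hT u
    refine ⟨fun z => jetEval z u, fun z => x + z • G z, analyticAt_jetEval u 0,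
      analyticAt_const.add (analyticAt_id.smul hG), by simp, .of_forall fun z => ?_⟩
    rw [mulVec_smul, ← mulVecLin_apply, hSu z, hu, jetEval_single, Fin.val_last]
    module

theorem mem_VkSet_succ_of_forall_B_eq_zero (hS : ∀ i j, AnalyticAt ℂ (fun z => S z i j) 0)
    (hB : B.IsSymm) (hB' : B.SeparatingLeft)
    (hcompat : ∀ᶠ z in 𝓝 (0 : ℂ), ∀ v w, B (S z *ᵥ v) w = B v (S z *ᵥ w))
    {f h : ℂ → Fin n → ℂ} (hf : AnalyticAt ℂ f 0) (hh : AnalyticAt ℂ h 0)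
    (hSf : ∀ᶠ z in 𝓝 0, S z *ᵥ f z = z ^ k • h z) (horth : ∀ w ∈ VkSet S k, B (h 0) w = 0) :
    f 0 ∈ VkSet S (k + 1) := by
  obtain ⟨u, H, hu, hH, hH0, hSu⟩ := exists_smul_mulVec_eq_pow_smul hS hB hB' hcompat horth
  refine mem_VkSet_iff.2 ⟨fun z => f z - z • u z, dslope (fun z => h z - H z) 0,
    hf.sub (analyticAt_id.smul hu), (hh.sub hH).dslope, by simp, ?_⟩
  filter_upwards [hSf, hSu] with z hzf hzu
  have hslope := sub_smul_dslope (fun z => h z - H z) 0 z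
  simp only [sub_zero, hH0, sub_self] at hslope
  rw [mulVec_sub, hzf, hzu, pow_succ, mul_smul, hslope, smul_sub]

end VkSet

theorem stmt10_general (n : ℕ) (S : ℂ → Matrix (Fin n) (Fin n) ℂ)
    (hS : ∀ i j, AnalyticAt ℂ (fun z => S z i j) 0)
    (B : (Fin n → ℂ) →ₗ[ℂ] (Fin n → ℂ) →ₗ[ℂ] ℂ)
    (hsymm : ∀ v w, B v w = B w v)
    (hnondeg : ∀ v, (∀ w, B v w = 0) → v = 0)
    (hcompat : ∀ᶠ z in 𝓝 (0 : ℂ), ∀ v w, B (S z *ᵥ v) w = B v (S z *ᵥ w)) :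
    ∀ k : ℕ, ∀ v ∈ VkSet S k,
      (v ∈ VkSet S (k + 1) ↔
        ∀ w ∈ VkSet S k, ∀ f g : ℂ → Fin n → ℂ,
          (∀ i, AnalyticAt ℂ (fun z => f z i) 0) → f 0 = v →
          (∃ h : ℂ → Fin n → ℂ, (∀ i, AnalyticAt ℂ (fun z => h z i) 0) ∧
            ∀ᶠ z in 𝓝 (0 : ℂ), S z *ᵥ f z = z ^ k • h z) →
          (∀ i, AnalyticAt ℂ (fun z => g z i) 0) → g 0 = w →
          (∃ h : ℂ → Fin n → ℂ, (∀ i, AnalyticAt ℂ (fun z => h z i) 0) ∧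
            ∀ᶠ z in 𝓝 (0 : ℂ), S z *ᵥ g z = z ^ k • h z) →
          Filter.Tendsto (fun z : ℂ => (z ^ k)⁻¹ * B (S z *ᵥ f z) (g z))
            (𝓝[≠] (0 : ℂ)) (𝓝 0)) := by
  have hB : LinearMap.BilinForm.IsSymm B := ⟨hsymm⟩
  intro k v hv
  constructor
  · rintro hv' w - f g hf rfl ⟨F, -, hSf⟩ hg rfl ⟨G, hG, hSg⟩
    obtain ⟨f₀, h₀, hf₀, hh₀, hf₀v, hSf₀⟩ := mem_VkSet_iff.1 hv'
    have hf := (analyticAt_pi_iff.2 hf).continuousAt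
    have hG := (analyticAt_pi_iff.2 hG).continuousAt
    have hG0 : B (G 0) (f 0) = 0 := hf₀v ▸ B_eq_zero_of_mulVec_eq_pow_succ_smul hB hcompat
      hf₀.continuousAt hh₀.continuousAt (analyticAt_pi_iff.2 hg).continuousAt hG hSf₀ hSg
    have hlim := tendsto_inv_pow_mul_of_eq_pow_smul B hSg hG hf
    rw [hG0] at hlim
    exact hlim.congr' (eventually_inv_pow_mul_B_mulVec_comm hB hcompat f g)
  · intro hlim
    obtain ⟨f, h, hf, hh, rfl, hSf⟩ := mem_VkSet_iff.1 hv
    refine mem_VkSet_succ_of_forall_B_eq_zero hS hB hnondeg hcompat hf hh hSf fun w hw => ?_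
    obtain ⟨g, G, hg, hG, rfl, hSg⟩ := mem_VkSet_iff.1 hw
    exact tendsto_nhds_unique
      (tendsto_inv_pow_mul_of_eq_pow_smul B hSf hh.continuousAt hg.continuousAt)
      (hlim _ hw f g (analyticAt_pi_iff.1 hf) rfl ⟨h, analyticAt_pi_iff.1 hh, hSf⟩
        (analyticAt_pi_iff.1 hg) rfl ⟨G, analyticAt_pi_iff.1 hG, hSg⟩)

/-- Let `S` be as before and let `B` be a nondegenerate symmetric bilinear form on `ℂⁿ`
with `B (S z v) w = B v (S z w)` near `0`.  Then for `v ∈ V_k^S` one has `v ∈ V_{k+1}^S`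
iff for every `w ∈ V_k^S` and all analytic `f, g` with `f 0 = v`, `g 0 = w` whose images
under `S` vanish to order `≥ k`, the limit `lim_{z→0} z^{−k}·B (S z f z) (g z)` is `0`;
i.e. the induced form `⟨·,·⟩_k` on `V_k^S` is well defined with radical exactly
`V_{k+1}^S`, hence nondegenerate on `V_k^S/V_{k+1}^S`. -/
theorem stmt10 (n : ℕ) (hn : 1 ≤ n) (S : ℂ → Matrix (Fin n) (Fin n) ℂ)
    (hS : ∀ i j, AnalyticAt ℂ (fun z => S z i j) 0)
    (hinv : ∃ ε > (0 : ℝ), ∀ z : ℂ, z ≠ 0 → ‖z‖ < ε → IsUnit (S z))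
    (B : (Fin n → ℂ) →ₗ[ℂ] (Fin n → ℂ) →ₗ[ℂ] ℂ)
    (hsymm : ∀ v w, B v w = B w v)
    (hnondeg : ∀ v, (∀ w, B v w = 0) → v = 0)
    (hcompat : ∀ᶠ z in 𝓝 (0 : ℂ), ∀ v w, B (S z *ᵥ v) w = B v (S z *ᵥ w)) :
    ∀ k : ℕ, ∀ v ∈ VkSet S k,
      (v ∈ VkSet S (k + 1) ↔
        ∀ w ∈ VkSet S k, ∀ f g : ℂ → Fin n → ℂ,
          (∀ i, AnalyticAt ℂ (fun z => f z i) 0) → f 0 = v →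
          (∃ h : ℂ → Fin n → ℂ, (∀ i, AnalyticAt ℂ (fun z => h z i) 0) ∧
            ∀ᶠ z in 𝓝 (0 : ℂ), S z *ᵥ f z = z ^ k • h z) →
          (∀ i, AnalyticAt ℂ (fun z => g z i) 0) → g 0 = w →
          (∃ h : ℂ → Fin n → ℂ, (∀ i, AnalyticAt ℂ (fun z => h z i) 0) ∧
            ∀ᶠ z in 𝓝 (0 : ℂ), S z *ᵥ g z = z ^ k • h z) →
          Filter.Tendsto (fun z : ℂ => (z ^ k)⁻¹ * B (S z *ᵥ f z) (g z))
            (𝓝[≠] (0 : ℂ)) (𝓝 0)) :=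
  stmt10_general n S hS B hsymm hnondeg hcompat
end

section
/- For every t ∈ ℂ∖{0}, every h ∈ ℂ and all positive integers r ≠ s: Φ_{r,s}(h, c(t))·Φ_{s,r}(h, c(t)) = (h − h_{r,s}(t))²·(h − h_{s,r}(t))². Moreover, for every positive integer s, every t ∈ ℂ∖{0} and every h ∈ ℂ: Φ_{s,s}(h, c(t)) = (h − h_{s,s}(t))². -/
/-- `Φ_{r,s}(h,c) = (h + (r²−1)(c−13)/24 + (rs−1)/2)(h + (s²−1)(c−13)/24 + (rs−1)/2)
      + (r²−s²)²/16`. -/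
noncomputable def PhiKac (r s : ℕ) (h c : ℂ) : ℂ :=
  (h + ((r : ℂ) ^ 2 - 1) * (c - 13) / 24 + ((r : ℂ) * (s : ℂ) - 1) / 2) *
    (h + ((s : ℂ) ^ 2 - 1) * (c - 13) / 24 + ((r : ℂ) * (s : ℂ) - 1) / 2) +
    ((r : ℂ) ^ 2 - (s : ℂ) ^ 2) ^ 2 / 16

/-- `c(t) = 6t + 13 + 6/t`. -/
noncomputable def cKac (t : ℂ) : ℂ := 6 * t + 13 + 6 / t

/-- `h_{r,s}(t) = ((1+t)² − (s+tr)²)/(4t)`. -/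
noncomputable def hKac (r s : ℕ) (t : ℂ) : ℂ :=
  ((1 + t) ^ 2 - ((s : ℂ) + t * (r : ℂ)) ^ 2) / (4 * t)

lemma phi_factor (t : ℂ) (ht : t ≠ 0) (h : ℂ) (r s : ℕ) :
    PhiKac r s h (cKac t) = (h - hKac r s t) * (h - hKac s r t) := by
  have h4 : (4:ℂ) * t ≠ 0 := mul_ne_zero (by norm_num) ht
  have h16 : (16:ℂ) * t ^ 2 ≠ 0 := mul_ne_zero (by norm_num) (pow_ne_zero _ ht)
  have hc : cKac t - 13 = 6 * (t ^ 2 + 1) / t := by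
    rw [cKac, eq_div_iff ht]; rw [add_sub_assoc, add_mul, add_mul, sub_mul, div_mul_cancel₀ _ ht]; ring
  have e : ∀ a y : ℂ, h + a * (6 * (t ^ 2 + 1) / t) / 24 + y
      = (4 * t * h + a * (t ^ 2 + 1) + 4 * t * y) / (4 * t) := by
    intro a y
    have hx : a * (6 * (t ^ 2 + 1) / t) / 24 = a * (t ^ 2 + 1) / (4 * t) := by
      rw [mul_div_assoc', div_div, div_eq_div_iff (by exact mul_ne_zero ht (by norm_num)) h4]
      ring
    rw [hx, eq_div_iff h4, add_mul, add_mul, div_mul_cancel₀ _ h4]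
    ring
  have eh : ∀ N : ℂ, h - N / (4 * t) = (4 * t * h - N) / (4 * t) := by
    intro N
    rw [eq_div_iff h4, sub_mul, div_mul_cancel₀ _ h4]; ring
  rw [PhiKac, hc, hKac, hKac, e, e, eh, eh, div_mul_div_comm, div_mul_div_comm]
  rw [div_add' _ _ _ (by exact mul_ne_zero h4 h4), div_eq_div_iff (mul_ne_zero h4 h4) (mul_ne_zero h4 h4)]
  ring

/-- For every `t ≠ 0`, every `h ∈ ℂ`, and all positive integers `r ≠ s`:
`Φ_{r,s}(h,c(t))·Φ_{s,r}(h,c(t)) = (h − h_{r,s}(t))²·(h − h_{s,r}(t))²`; moreover for every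
positive integer `s`: `Φ_{s,s}(h,c(t)) = (h − h_{s,s}(t))²`. -/
theorem stmt11 (t : ℂ) (ht : t ≠ 0) (h : ℂ) :
    (∀ r s : ℕ, 0 < r → 0 < s → r ≠ s →
      PhiKac r s h (cKac t) * PhiKac s r h (cKac t)
        = (h - hKac r s t) ^ 2 * (h - hKac s r t) ^ 2) ∧
    (∀ s : ℕ, 0 < s → PhiKac s s h (cKac t) = (h - hKac s s t) ^ 2) := by
  refine ⟨fun r s _ _ _ => ?_, fun s _ => ?_⟩
  · rw [phi_factor t ht h r s, phi_factor t ht h s r]; ring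
  · rw [phi_factor t ht h s s]; ring
end

section
/- For all positive integers r, s: (i) Φ_{r,s}(h_{r,s}(t), c(t)) = 0 for every t ∈ ℂ∖{0}; and (ii) conversely, if (h, c) ∈ ℂ² satisfies Φ_{r,s}(h, c) = 0, then there exists t ∈ ℂ∖{0} with c = c(t) and h = h_{r,s}(t). -/
lemma cKac_inv (t : ℂ) : cKac t⁻¹ = cKac t := by
  simp only [cKac, div_eq_mul_inv, inv_inv]
  ring

lemma PhiKac_cKac (r s : ℕ) (h : ℂ) {t : ℂ} (ht : t ≠ 0) :
    PhiKac r s h (cKac t) = (h - hKac r s t) * (h - hKac r s t⁻¹) := by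
  unfold PhiKac cKac hKac
  field_simp
  ring

lemma exists_cKac_eq (c : ℂ) : ∃ t : ℂ, t ≠ 0 ∧ c = cKac t := by
  obtain ⟨z, hz⟩ := IsAlgClosed.exists_pow_nat_eq ((c - 13) ^ 2 - 144) two_pos
  set t := (c - 13 + z) / 12
  have hquad : 6 * t ^ 2 + (13 - c) * t + 6 = 0 := by
    linear_combination hz / 24
  have ht : t ≠ 0 := by
    rintro h0
    simp [h0] at hquad
  refine ⟨t, ht, ?_⟩
  unfold cKac
  field_simp
  linear_combination -hquad

theorem stmt12_general (r s : ℕ) :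
    (∀ t : ℂ, t ≠ 0 → PhiKac r s (hKac r s t) (cKac t) = 0) ∧
    (∀ h c : ℂ, PhiKac r s h c = 0 → ∃ t : ℂ, t ≠ 0 ∧ c = cKac t ∧ h = hKac r s t) := by
  refine ⟨fun t ht => by rw [PhiKac_cKac r s _ ht, sub_self, zero_mul], fun h c hΦ => ?_⟩
  obtain ⟨t, ht, rfl⟩ := exists_cKac_eq c
  rw [PhiKac_cKac r s h ht, mul_eq_zero, sub_eq_zero, sub_eq_zero] at hΦ
  rcases hΦ with h_eq | h_eq
  · exact ⟨t, ht, rfl, h_eq⟩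
  · exact ⟨t⁻¹, inv_ne_zero ht, (cKac_inv t).symm, h_eq⟩

/-- For all positive integers `r, s`: (i) `Φ_{r,s}(h_{r,s}(t), c(t)) = 0` for every `t ≠ 0`;
(ii) conversely, every zero `(h,c)` of `Φ_{r,s}` lies on this curve: there is `t ≠ 0` with
`c = c(t)` and `h = h_{r,s}(t)`. -/
theorem stmt12 (r s : ℕ) (hr : 0 < r) (hs : 0 < s) :
    (∀ t : ℂ, t ≠ 0 → PhiKac r s (hKac r s t) (cKac t) = 0) ∧
    (∀ h c : ℂ, PhiKac r s h c = 0 → ∃ t : ℂ, t ≠ 0 ∧ c = cKac t ∧ h = hKac r s t) :=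
  stmt12_general r s
end

section
/- Let α, β, γ₊, γ₋ ∈ ℂ with γ₊ + γ₋ = −2β and γ₊·γ₋ = −2 (so γ₊ and γ₋ are the two solutions γ of β = 1/γ − γ/2). Put h = (α² − β²)/2 and c = 1 − 12β², and for positive integers r, s set Φ'_{r,s}(α,β) = α + (r/2)γ₊ + (s/2)γ₋ and Φ''_{r,s}(α,β) = α − (r/2)γ₊ − (s/2)γ₋. Then Φ_{r,s}(h,c) = (1/4)·Φ'_{r,s}(α,β)·Φ''_{r,s}(α,β)·Φ'_{s,r}(α,β)·Φ''_{s,r}(α,β); consequently Φ_{r,s}(h,c)·Φ_{s,r}(h,c) = (1/16)·(Φ'_{r,s}·Φ'_{s,r}·Φ''_{r,s}·Φ''_{s,r})². -/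
/-- Factorization of the Kac determinant factor through the Fock parametrization: if
`γ₊ + γ₋ = −2β` and `γ₊γ₋ = −2`, and `h = (α²−β²)/2`, `c = 1−12β²`,
`Φ'_{r,s} = α + (r/2)γ₊ + (s/2)γ₋`, `Φ''_{r,s} = α − (r/2)γ₊ − (s/2)γ₋`, then
`Φ_{r,s}(h,c) = (1/4)·Φ'_{r,s}·Φ''_{r,s}·Φ'_{s,r}·Φ''_{s,r}` and consequently
`Φ_{r,s}(h,c)·Φ_{s,r}(h,c) = (1/16)·(Φ'_{r,s}Φ'_{s,r}Φ''_{r,s}Φ''_{s,r})²`. -/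
theorem stmt13 (α β γp γm : ℂ) (hsum : γp + γm = -2 * β) (hprod : γp * γm = -2)
    (r s : ℕ) (hr : 0 < r) (hs : 0 < s) :
    PhiKac r s ((α ^ 2 - β ^ 2) / 2) (1 - 12 * β ^ 2)
        = (1 / 4) * (α + (r : ℂ) / 2 * γp + (s : ℂ) / 2 * γm)
            * (α - (r : ℂ) / 2 * γp - (s : ℂ) / 2 * γm)
            * (α + (s : ℂ) / 2 * γp + (r : ℂ) / 2 * γm)
            * (α - (s : ℂ) / 2 * γp - (r : ℂ) / 2 * γm) ∧
    PhiKac r s ((α ^ 2 - β ^ 2) / 2) (1 - 12 * β ^ 2)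
        * PhiKac s r ((α ^ 2 - β ^ 2) / 2) (1 - 12 * β ^ 2)
      = (1 / 16) * ((α + (r : ℂ) / 2 * γp + (s : ℂ) / 2 * γm)
            * (α + (s : ℂ) / 2 * γp + (r : ℂ) / 2 * γm)
            * (α - (r : ℂ) / 2 * γp - (s : ℂ) / 2 * γm)
            * (α - (s : ℂ) / 2 * γp - (r : ℂ) / 2 * γm)) ^ 2 := by
  have hβ : β = -(γp + γm) / 2 := by linear_combination hsum / 2
  subst hβ
  have key : ∀ r' s' : ℕ,
      PhiKac r' s' ((α ^ 2 - (-(γp + γm) / 2) ^ 2) / 2) (1 - 12 * (-(γp + γm) / 2) ^ 2)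
        = (1 / 4) * (α + (r' : ℂ) / 2 * γp + (s' : ℂ) / 2 * γm)
            * (α - (r' : ℂ) / 2 * γp - (s' : ℂ) / 2 * γm)
            * (α + (s' : ℂ) / 2 * γp + (r' : ℂ) / 2 * γm)
            * (α - (s' : ℂ) / 2 * γp - (r' : ℂ) / 2 * γm) := by
    intro r' s'
    unfold PhiKac
    linear_combination
      ((1/32) * (s' : ℂ)^4 + (-1/8) * (r' : ℂ) * (s' : ℂ)^3
        + (3/16) * (r' : ℂ)^2 * (s' : ℂ)^2 + (-1/8) * (r' : ℂ)^3 * (s' : ℂ)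
        + (1/32) * (r' : ℂ)^4
        + (-1/32) * γm^2 * (r' : ℂ) * (s' : ℂ)^3 + (1/16) * γm^2 * (r' : ℂ)^2 * (s' : ℂ)^2
        + (-1/32) * γm^2 * (r' : ℂ)^3 * (s' : ℂ)
        + (-1/64) * γp * γm * (s' : ℂ)^4 + (1/32) * γp * γm * (r' : ℂ)^2 * (s' : ℂ)^2
        + (-1/64) * γp * γm * (r' : ℂ)^4
        + (-1/32) * γp^2 * (r' : ℂ) * (s' : ℂ)^3 + (1/16) * γp^2 * (r' : ℂ)^2 * (s' : ℂ)^2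
        + (-1/32) * γp^2 * (r' : ℂ)^3 * (s' : ℂ)
        + (-1/8) * α^2 * (s' : ℂ)^2 + (1/4) * α^2 * (r' : ℂ) * (s' : ℂ)
        + (-1/8) * α^2 * (r' : ℂ)^2) * hprod
  refine ⟨key r s, ?_⟩
  rw [key r s, key s r]
  ring
end

section
/- For all integers r, s, m, n: h⁻_{r,s} = h⁻_{m,n} if and only if there exists k ∈ ℤ such that (m = r + kp and n = s + kq) or (m = −r + kp and n = −s + kq). -/
/-- `h⁻_{r,s} = ((rq − sp)² − (p − q)²)/(4pq)` for coprime positive integers `p, q`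
and integers `r, s`. -/
def hMinus (p q : ℕ) (r s : ℤ) : ℚ :=
  (((r : ℚ) * q - (s : ℚ) * p) ^ 2 - ((p : ℚ) - q) ^ 2) / (4 * p * q)

/-- For coprime positive integers `p, q` and integers `r, s, m, n`:
`h⁻_{r,s} = h⁻_{m,n}` iff there is `k ∈ ℤ` with `(m = r + kp ∧ n = s + kq)` or
`(m = −r + kp ∧ n = −s + kq)`. -/
theorem stmt14 (p q : ℕ) (hp : 0 < p) (hq : 0 < q) (hpq : Nat.Coprime p q)
    (r s m n : ℤ) :
    hMinus p q r s = hMinus p q m n ↔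
      ∃ k : ℤ, (m = r + k * p ∧ n = s + k * q) ∨ (m = -r + k * p ∧ n = -s + k * q) := by
  have hp' : ((p : ℚ)) ≠ 0 := by positivity
  have hq' : ((q : ℚ)) ≠ 0 := by positivity
  have key : hMinus p q r s = hMinus p q m n ↔
      (r * q - s * p) ^ 2 = (m * q - n * p) ^ 2 := by
    unfold hMinus
    rw [div_eq_div_iff (by positivity) (by positivity)]
    constructor
    · intro h
      have h2 : ((r : ℚ) * q - s * p) ^ 2 = ((m : ℚ) * q - n * p) ^ 2 := by
        have := mul_right_cancel₀ (b := (4 : ℚ) * p * q) (by positivity) h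
        linarith
      exact_mod_cast h2
    · intro h
      have h2 : ((r : ℚ) * q - s * p) ^ 2 = ((m : ℚ) * q - n * p) ^ 2 := by exact_mod_cast h
      rw [h2]
  rw [key]
  have hcop : IsCoprime (p : ℤ) (q : ℤ) := Int.isCoprime_iff_gcd_eq_one.2 hpq
  constructor
  · intro h
    have h2 : ((m * q - n * p) - (r * q - s * p)) * ((m * q - n * p) + (r * q - s * p)) = 0 := by
      ring_nf
      linarith [h]
    rcases mul_eq_zero.1 h2 with h3 | h3
    · -- m*q - n*p = r*q - s*p
      have hd : (p : ℤ) ∣ (m - r) * q := ⟨n - s, by linarith⟩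
      obtain ⟨k, hk⟩ := hcop.dvd_of_dvd_mul_right hd
      refine ⟨k, Or.inl ⟨by linarith, ?_⟩⟩
      have : (n - s) * p = k * q * p := by
        have : (m - r) * q = (n - s) * p := by linarith
        rw [hk] at this; linarith [this]
      have := mul_right_cancel₀ (b := (p : ℤ)) (by exact_mod_cast hp.ne') this
      linarith
    · -- m*q - n*p = -(r*q - s*p)
      have hd : (p : ℤ) ∣ (m + r) * q := ⟨n + s, by linarith⟩
      obtain ⟨k, hk⟩ := hcop.dvd_of_dvd_mul_right hd
      refine ⟨k, Or.inr ⟨by linarith, ?_⟩⟩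
      have : (n + s) * p = k * q * p := by
        have : (m + r) * q = (n + s) * p := by linarith
        rw [hk] at this; linarith [this]
      have := mul_right_cancel₀ (b := (p : ℤ)) (by exact_mod_cast hp.ne') this
      linarith
  · rintro ⟨k, ⟨hm, hn⟩ | ⟨hm, hn⟩⟩ <;> subst hm <;> subst hn <;> ring
end

section
/- For all integers r, s, m, n: h⁺_{r,s} = h⁺_{m,n} if and only if there exists k ∈ ℤ such that (m = r − kp and n = s + kq) or (m = −r − kp and n = −s + kq). -/
/-- `h⁺_{r,s} = ((p + q)² − (rq + sp)²)/(4pq)` for coprime positive integers `p, q`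
and integers `r, s`. -/
def hPlus (p q : ℕ) (r s : ℤ) : ℚ :=
  (((p : ℚ) + q) ^ 2 - ((r : ℚ) * q + (s : ℚ) * p) ^ 2) / (4 * p * q)

/-- For coprime positive integers `p, q` and integers `r, s, m, n`:
`h⁺_{r,s} = h⁺_{m,n}` iff there is `k ∈ ℤ` with `(m = r − kp ∧ n = s + kq)` or
`(m = −r − kp ∧ n = −s + kq)`. -/
theorem stmt15 (p q : ℕ) (hp : 0 < p) (hq : 0 < q) (hpq : Nat.Coprime p q)
    (r s m n : ℤ) :
    hPlus p q r s = hPlus p q m n ↔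
      ∃ k : ℤ, (m = r - k * p ∧ n = s + k * q) ∨ (m = -r - k * p ∧ n = -s + k * q) := by
  have hp0 : (p : ℚ) ≠ 0 := Nat.cast_ne_zero.mpr hp.ne'
  have hq0 : (q : ℚ) ≠ 0 := Nat.cast_ne_zero.mpr hq.ne'
  have hpz : (p : ℤ) ≠ 0 := Int.natCast_ne_zero.mpr hp.ne'
  have hcop : IsCoprime (p : ℤ) (q : ℤ) := Int.isCoprime_iff_gcd_eq_one.mpr hpq
  constructor
  · intro h
    have h' : (((p : ℚ) + q) ^ 2 - ((r : ℚ) * q + (s : ℚ) * p) ^ 2) =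
        (((p : ℚ) + q) ^ 2 - ((m : ℚ) * q + (n : ℚ) * p) ^ 2) := by
      have := h
      unfold hPlus at this
      field_simp at this
      linarith
    have hsqQ : ((r : ℚ) * q + (s : ℚ) * p) ^ 2 = ((m : ℚ) * q + (n : ℚ) * p) ^ 2 := by
      linarith
    have hsq : (r * q + s * p) ^ 2 = (m * q + n * p) ^ 2 := by exact_mod_cast hsqQ
    have hfac : ((r * q + s * p) - (m * q + n * p)) * ((r * q + s * p) + (m * q + n * p)) = 0 := by
      nlinarith [hsq]
    rcases mul_eq_zero.mp hfac with h0 | h0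
    · -- m*q + n*p = r*q + s*p
      have hdvd : (p : ℤ) ∣ (m - r) := by
        have : (p : ℤ) ∣ (m - r) * q := ⟨s - n, by linarith⟩
        exact hcop.dvd_of_dvd_mul_right this
      obtain ⟨t, ht⟩ := hdvd
      refine ⟨-t, Or.inl ⟨by linarith, ?_⟩⟩
      have hsn : (p : ℤ) * (s - n) = (p : ℤ) * (t * q) := by nlinarith [ht, h0]
      have := mul_left_cancel₀ hpz hsn
      linarith
    · -- m*q + n*p = -(r*q + s*p)
      have hdvd : (p : ℤ) ∣ (m + r) := by
        have : (p : ℤ) ∣ (m + r) * q := ⟨-(n + s), by linarith⟩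
        exact hcop.dvd_of_dvd_mul_right this
      obtain ⟨t, ht⟩ := hdvd
      refine ⟨-t, Or.inr ⟨by linarith, ?_⟩⟩
      have hsn : (p : ℤ) * (n + s) = (p : ℤ) * (-(t * q)) := by nlinarith [ht, h0]
      have := mul_left_cancel₀ hpz hsn
      linarith
  · rintro ⟨k, ⟨hm, hn⟩ | ⟨hm, hn⟩⟩ <;> subst hm <;> subst hn <;>
      unfold hPlus <;> push_cast <;> ring_nf
end

section
/- F_λ is differentiable on U, and for every n ∈ ℕ and every z ∈ U: ∑_{k=1}^r z_k^n·( z_k·(∂F_λ/∂z_k)(z) + ((n+1)/2·γ_k² − λ·γ_k)·F_λ(z) ) = (1/2)·∑_{k=0}^n (γ₁z₁^k + … + γ_r z_r^k)·(γ₁z₁^{n−k} + … + γ_r z_r^{n−k})·F_λ(z). -/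
/-- `F_λ(z) = ∏_{1≤i<j≤r} (z_i − z_j)^{γ_i γ_j} · ∏_{j=1}^r z_j^{λγ_j}`, with principal
complex powers of positive real numbers. -/
noncomputable def Flam (r : ℕ) (γ : Fin r → ℂ) (lam : ℂ) (z : Fin r → ℝ) : ℂ :=
  (∏ p ∈ Finset.univ.filter (fun p : Fin r × Fin r => p.1 < p.2),
      (((z p.1 - z p.2 : ℝ)) : ℂ) ^ (γ p.1 * γ p.2)) *
    ∏ j, ((z j : ℝ) : ℂ) ^ (lam * γ j)

/-!
On `U` the function `F_λ` is `exp (log F_λ)` with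
`log F_λ = ∑_{i<j} γ_i γ_j log (z_i - z_j) + λ ∑_j γ_j log z_j`, so `∑_k z_k^{n+1} ∂_k F_λ`, the
derivative of `F_λ` in the direction `z^{n+1}`, is `F_λ` times
`∑_{i<j} γ_i γ_j (z_i^{n+1} - z_j^{n+1}) / (z_i - z_j) + λ ∑_j γ_j z_j^n`.
Each difference quotient is the geometric sum `∑_{m ≤ n} z_i^m z_j^{n-m}`, and expanding the
right-hand side as a double sum over `(i, j)` yields twice these off-diagonal terms plus the
diagonal `(n + 1) ∑_j γ_j² z_j^n`; the `λ`-terms cancel.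
-/

open Complex Finset Function Filter Topology

theorem sum_sum_eq_sum_lt_add_sum_diag {ι M : Type*} [Fintype ι] [LinearOrder ι]
    [AddCommMonoid M] (f : ι → ι → M) :
    ∑ i, ∑ j, f i j =
      ∑ p : ι × ι with p.1 < p.2, (f p.1 p.2 + f p.2 p.1) + ∑ i, f i i := by
  rw [← Fintype.sum_prod_type', ← sum_filter_add_sum_filter_not univ (fun p : ι × ι => p.1 < p.2),
    ← sum_filter_add_sum_filter_not (univ.filter fun p : ι × ι => ¬ p.1 < p.2)
      (fun p : ι × ι => p.2 < p.1), sum_add_distrib, add_assoc]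
  congr 1
  have hswap : ∑ p : ι × ι with p.1 < p.2, f p.2 p.1 =
      ∑ p ∈ (univ.filter fun p : ι × ι => ¬ p.1 < p.2).filter (fun p => p.2 < p.1), f p.1 p.2 :=
    sum_nbij' Prod.swap Prod.swap (by simp +contextual [le_of_lt]) (by simp) (by simp) (by simp)
      (by simp)
  have hdiag : ∑ p ∈ (univ.filter fun p : ι × ι => ¬ p.1 < p.2).filter (fun p => ¬ p.2 < p.1),
      f p.1 p.2 = ∑ i, f i i :=
    sum_nbij' Prod.fst (fun i => (i, i)) (by simp) (by simp)
      (by simpa using fun a b h₁ h₂ => le_antisymm h₂ h₁) (by simp)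
      (by simpa using fun a b h₁ h₂ => by rw [le_antisymm h₁ h₂])
  rw [hswap, hdiag]

theorem sum_range_mul_sum_pow {R ι : Type*} [CommSemiring R] [Fintype ι] (γ w : ι → R) (n : ℕ) :
    ∑ m ∈ range (n + 1), (∑ j, γ j * w j ^ m) * (∑ j, γ j * w j ^ (n - m)) =
      ∑ i, ∑ j, γ i * γ j * ∑ m ∈ range (n + 1), w i ^ m * w j ^ (n - m) := by
  simp only [sum_mul_sum]
  rw [sum_comm]
  refine sum_congr rfl fun i _ => ?_
  rw [sum_comm]
  refine sum_congr rfl fun j _ => ?_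
  rw [mul_sum]
  exact sum_congr rfl fun m _ => by ring

theorem pi_apply_eq_sum_smul_single {ι R M F : Type*} [Fintype ι] [DecidableEq ι] [Semiring R]
    [AddCommMonoid M] [Module R M] [FunLike F (ι → R) M] [LinearMapClass F R (ι → R) M]
    (f : F) (x : ι → R) : f x = ∑ i, x i • f (Pi.single i 1) := by
  conv_lhs => rw [pi_eq_sum_univ' x]
  simp only [map_sum, map_smul]

theorem sum_range_mul_sum_pow_eq {K ι : Type*} [Field K] [Fintype ι] [LinearOrder ι]
    (γ w : ι → K) (hw : Injective w) (n : ℕ) :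
    ∑ m ∈ range (n + 1), (∑ j, γ j * w j ^ m) * (∑ j, γ j * w j ^ (n - m)) =
      2 * ∑ p : ι × ι with p.1 < p.2,
          γ p.1 * γ p.2 * ((w p.1 ^ (n + 1) - w p.2 ^ (n + 1)) / (w p.1 - w p.2)) +
        (n + 1) * ∑ j, γ j ^ 2 * w j ^ n := by
  have hgeom : ∀ i j, i ≠ j → ∑ m ∈ range (n + 1), w i ^ m * w j ^ (n - m) =
      (w i ^ (n + 1) - w j ^ (n + 1)) / (w i - w j) := fun i j hij => by
    simpa using (Commute.all (w i) (w j)).geom_sum₂ (hw.ne hij) (n + 1)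
  have hdiag : ∀ i, ∑ m ∈ range (n + 1), w i ^ m * w i ^ (n - m) = (n + 1) * w i ^ n := by
    simpa using fun i => geom_sum₂_self (w i) (n + 1)
  rw [sum_range_mul_sum_pow, sum_sum_eq_sum_lt_add_sum_diag, mul_sum, mul_sum]
  congr 1
  · refine sum_congr rfl fun p hp => ?_
    have hlt := (mem_filter.1 hp).2
    rw [hgeom _ _ hlt.ne, hgeom _ _ hlt.ne', ← neg_sub (w p.1), ← neg_sub (w p.1 ^ (n + 1)),
      neg_div_neg_eq]
    ring
  · exact sum_congr rfl fun i _ => by rw [hdiag]; ring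

section

variable {r : ℕ} (γ : Fin r → ℂ) (lam : ℂ)

noncomputable def logFlam (z : Fin r → ℝ) : ℂ :=
  ∑ p : Fin r × Fin r with p.1 < p.2, γ p.1 * γ p.2 * Real.log (z p.1 - z p.2) +
    ∑ j, lam * γ j * Real.log (z j)

variable {γ lam}

theorem ofReal_cpow_eq_exp {x : ℝ} (hx : 0 < x) (c : ℂ) : (x : ℂ) ^ c = exp (c * Real.log x) := by
  rw [cpow_def_of_ne_zero (ofReal_ne_zero.2 hx.ne'), ofReal_log hx.le, mul_comm]

theorem Flam_eq_exp_logFlam {z : Fin r → ℝ} (hz : StrictAnti z) (hpos : ∀ j, 0 < z j) :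
    Flam r γ lam z = exp (logFlam γ lam z) := by
  rw [logFlam, exp_add, exp_sum, exp_sum, Flam]
  congr 1
  · exact prod_congr rfl fun p hp => ofReal_cpow_eq_exp (sub_pos.2 (hz (mem_filter.1 hp).2)) _
  · exact prod_congr rfl fun j _ => ofReal_cpow_eq_exp (hpos j) _

theorem eventually_strictAnti_and_pos {z : Fin r → ℝ} (hz : StrictAnti z) (hpos : ∀ j, 0 < z j) :
    ∀ᶠ w in 𝓝 z, StrictAnti w ∧ ∀ j, 0 < w j := by
  have hanti : ∀ᶠ w in 𝓝 z, ∀ i j : Fin r, i < j → w j < w i := by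
    simp only [eventually_all]
    exact fun i j hij => (continuous_apply j).continuousAt.eventually_lt
      (continuous_apply i).continuousAt (hz hij)
  have hpos' : ∀ᶠ w in 𝓝 z, ∀ j, 0 < w j := eventually_all.2 fun j =>
    continuousAt_const.eventually_lt (continuous_apply j).continuousAt (hpos j)
  filter_upwards [hanti, hpos'] with w hw hw' using ⟨fun i j hij => hw i j hij, hw'⟩

theorem hasFDerivAt_logFlam {z : Fin r → ℝ} (hz : Injective z) (h0 : ∀ j, z j ≠ 0) :
    HasFDerivAt (logFlam γ lam)
      (∑ p : Fin r × Fin r with p.1 < p.2, (γ p.1 * γ p.2 / (z p.1 - z p.2)) •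
          ofRealCLM.comp (.proj (R := ℝ) (φ := fun _ : Fin r => ℝ) p.1 - .proj p.2) +
        ∑ j, (lam * γ j / z j) • ofRealCLM.comp (.proj (R := ℝ) (φ := fun _ : Fin r => ℝ) j))
      z := by
  refine .add (.fun_sum fun p hp => ?_) (.fun_sum fun j _ => ?_)
  · have hne : z p.1 - z p.2 ≠ 0 := sub_ne_zero.2 (hz.ne (mem_filter.1 hp).2.ne)
    refine ((ofRealCLM.hasFDerivAt.comp z
      (((hasFDerivAt_apply p.1 z).sub (hasFDerivAt_apply p.2 z)).log hne)).const_mul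
        (γ p.1 * γ p.2)).congr_fderiv ?_
    ext v
    simp
    ring
  · refine ((ofRealCLM.hasFDerivAt.comp z ((hasFDerivAt_apply j z).log (h0 j))).const_mul
      (lam * γ j)).congr_fderiv ?_
    ext v
    simp
    ring

theorem hasFDerivAt_Flam {z : Fin r → ℝ} (hz : StrictAnti z) (hpos : ∀ j, 0 < z j) :
    HasFDerivAt (Flam r γ lam) (Flam r γ lam z • fderiv ℝ (logFlam γ lam) z) z := by
  have hlog := (hasFDerivAt_logFlam (γ := γ) (lam := lam) hz.injective fun j => (hpos j).ne')
  rw [hlog.fderiv, Flam_eq_exp_logFlam hz hpos]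
  refine hlog.cexp.congr_of_eventuallyEq ?_
  filter_upwards [eventually_strictAnti_and_pos hz hpos] with w hw
  exact Flam_eq_exp_logFlam hw.1 hw.2

theorem fderiv_logFlam_apply {z : Fin r → ℝ} (hz : Injective z) (h0 : ∀ j, z j ≠ 0)
    (v : Fin r → ℝ) :
    fderiv ℝ (logFlam γ lam) z v =
      ∑ p : Fin r × Fin r with p.1 < p.2, γ p.1 * γ p.2 / (z p.1 - z p.2) * (v p.1 - v p.2) +
        ∑ j, lam * γ j / z j * v j := by
  rw [(hasFDerivAt_logFlam hz h0).fderiv]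
  simp

end

theorem stmt16_general (r : ℕ) (γ : Fin r → ℂ) (lam : ℂ) :
    (∀ z : Fin r → ℝ, StrictAnti z → (∀ i, 0 < z i) →
      DifferentiableAt ℝ (Flam r γ lam) z) ∧
    ∀ n : ℕ, ∀ z : Fin r → ℝ, StrictAnti z → (∀ i, 0 < z i) →
      ∑ k : Fin r, ((z k : ℝ) : ℂ) ^ n *
          (((z k : ℝ) : ℂ) * fderiv ℝ (Flam r γ lam) z (Pi.single k 1) +
            (((n : ℂ) + 1) / 2 * γ k ^ 2 - lam * γ k) * Flam r γ lam z) =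
        (1 / 2) * ∑ k ∈ Finset.range (n + 1),
          (∑ j, γ j * ((z j : ℝ) : ℂ) ^ k) * (∑ j, γ j * ((z j : ℝ) : ℂ) ^ (n - k)) *
            Flam r γ lam z := by
  refine ⟨fun z hz hpos => (hasFDerivAt_Flam hz hpos).differentiableAt, fun n z hz hpos => ?_⟩
  have h0 : ∀ j, (z j : ℂ) ≠ 0 := fun j => ofReal_ne_zero.2 (hpos j).ne'
  have euler : ∑ k, (z k : ℂ) ^ n * ((z k : ℂ) * fderiv ℝ (Flam r γ lam) z (Pi.single k 1)) =
      Flam r γ lam z * (∑ p : Fin r × Fin r with p.1 < p.2, γ p.1 * γ p.2 *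
          (((z p.1 : ℂ) ^ (n + 1) - (z p.2 : ℂ) ^ (n + 1)) / ((z p.1 : ℂ) - z p.2)) +
        lam * ∑ j, γ j * (z j : ℂ) ^ n) := calc
    _ = fderiv ℝ (Flam r γ lam) z (fun k => z k ^ (n + 1)) := by
      rw [pi_apply_eq_sum_smul_single (fderiv ℝ (Flam r γ lam) z)]
      simp [real_smul, pow_succ, mul_assoc]
    _ = _ := by
      rw [(hasFDerivAt_Flam hz hpos).fderiv, FunLike.coe_smul, Pi.smul_apply, smul_eq_mul,
        fderiv_logFlam_apply hz.injective fun j => (hpos j).ne', mul_sum]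
      push_cast
      congr 2
      · exact sum_congr rfl fun p _ => by ring
      · exact sum_congr rfl fun j _ => by field_simp [h0 j]; ring
  have hlin : ∑ k, (z k : ℂ) ^ n * ((((n : ℂ) + 1) / 2 * γ k ^ 2 - lam * γ k) * Flam r γ lam z) =
      Flam r γ lam z * (((n : ℂ) + 1) / 2 * ∑ k, γ k ^ 2 * (z k : ℂ) ^ n -
        lam * ∑ k, γ k * (z k : ℂ) ^ n) := by
    simp only [mul_sum, ← sum_sub_distrib]
    exact sum_congr rfl fun k _ => by ring
  rw [← sum_mul, sum_range_mul_sum_pow_eq γ (fun j => (z j : ℂ))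
    (ofReal_injective.comp hz.injective)]
  simp only [mul_add, sum_add_distrib]
  rw [euler, hlin]
  ring

/-- On `U = {0 < z_r < … < z₁}` the function `F_λ` is differentiable, and for every
`n ∈ ℕ` and `z ∈ U`:
`∑_{k=1}^r z_k^n (z_k ∂F_λ/∂z_k + ((n+1)/2·γ_k² − λγ_k) F_λ)
  = (1/2) ∑_{k=0}^n (∑_j γ_j z_j^k)(∑_j γ_j z_j^{n−k}) F_λ`. -/
theorem stmt16 (r : ℕ) (hr : 1 ≤ r) (γ : Fin r → ℂ) (lam : ℂ) :
    (∀ z : Fin r → ℝ, StrictAnti z → (∀ i, 0 < z i) →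
      DifferentiableAt ℝ (Flam r γ lam) z) ∧
    ∀ n : ℕ, ∀ z : Fin r → ℝ, StrictAnti z → (∀ i, 0 < z i) →
      ∑ k : Fin r, ((z k : ℝ) : ℂ) ^ n *
          (((z k : ℝ) : ℂ) * fderiv ℝ (Flam r γ lam) z (Pi.single k 1) +
            (((n : ℂ) + 1) / 2 * γ k ^ 2 - lam * γ k) * Flam r γ lam z) =
        (1 / 2) * ∑ k ∈ Finset.range (n + 1),
          (∑ j, γ j * ((z j : ℝ) : ℂ) ^ k) * (∑ j, γ j * ((z j : ℝ) : ℂ) ^ (n - k)) *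
            Flam r γ lam z :=
  stmt16_general r γ lam
end
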